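/- arXiv:1511.03810 — 6 statements merged into one kernel-verified Lean document; each statement's English description precedes it below -/
import Mathlib

section
/- Let n be an odd positive squarefree integer and let d1, d2, d3 be nonzero squarefree integers such that d1·d2·d3 is a perfect square. Suppose the homogeneous system H1: −n·t² + d2·u2² − d3·u3² = 0, H2: −n·t² + d3·u3² − d1·u1² = 0, H3: 2n·t² + d1·u1² − d2·u2² = 0 has a nonzero solution (t,u1,u2,u3) ≠ (0,0,0,0) over ℝ and over ℚ_p for every prime p. Then d2 > 0, d1 divides 2n, d2 divides 2n, and d1 ≡ d2 (mod 2). -/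
/-!
Over `ℝ`: if `d₂ < 0`, then `d₁ d₃ < 0` because `d₁ d₂ d₃` is a nonzero square, and `H₁` (when
`d₁ < 0`) or `H₃` (when `d₁ > 0`) equates terms of opposite signs, forcing the point to vanish.

At a prime `p ∤ n`: as the `dᵢ` are squarefree with square product, `p` divides an even number of
them. If it divides exactly `dᵢ` and `dⱼ`, two of the quadrics read
`dᵢ uᵢ² - dⱼ uⱼ² = s t²` and `dᵢ uᵢ² - dₖ uₖ² = r t²` with `s ∈ {±n, ±2n}`, and `s` is prime to
`p` unless `{i, j} = {1, 2}` and `p = 2`. A primitive `p`-adic point then descends: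
`p ∣ t`, then `p ∣ uₖ`, then `p² ∣ dᵢ uᵢ²` and `p² ∣ dⱼ uⱼ²` give `p ∣ uᵢ, uⱼ`. Hence a prime
dividing `d₁` or `d₂` but not `n` is `2` and divides both.
-/

section Squarefree

variable {α : Type*} [CommMonoidWithZero α]

theorem Squarefree.dvd_of_forall_prime_dvd [GCDMonoid α] [WfDvdMonoid α] {d b : α}
    (hd : Squarefree d) (h : ∀ p, Prime p → p ∣ d → p ∣ b) : d ∣ b := by
  nontriviality α
  obtain ⟨e, he⟩ := gcd_dvd_left d b
  by_cases he_unit : IsUnit e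
  · exact (Associated.symm ⟨he_unit.unit, he.symm⟩).dvd.trans (gcd_dvd_right d b)
  obtain ⟨p, hp, hpe⟩ :=
    WfDvdMonoid.exists_irreducible_factor he_unit (right_ne_zero_of_mul (he ▸ hd.ne_zero))
  have hpd : p ∣ d := hpe.trans (he ▸ dvd_mul_left e _)
  have hpg : p ∣ gcd d b := dvd_gcd hpd (h p hp.prime hpd)
  exact (hp.not_isUnit (hd p (he ▸ mul_dvd_mul hpg hpe))).elim

theorem Prime.dvd_iff_not_dvd_of_mul_mul_eq_sq [IsCancelMulZero α] {p a b c m : α}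
    (hp : Prime p) (ha : Squarefree a) (hb : Squarefree b) (hc : Squarefree c)
    (h : a * b * c = m ^ 2) (hpa : p ∣ a) : p ∣ b ↔ ¬ p ∣ c := by
  obtain ⟨k, rfl⟩ : p ∣ m := hp.dvd_of_dvd_pow (h ▸ (hpa.mul_right b).mul_right c)
  have hbc : p ∣ b * c := by
    have : p ^ (1 + 1) ∣ a * (b * c) := by
      rw [← mul_assoc, h]; exact pow_dvd_pow_of_dvd (dvd_mul_right p k) 2
    simpa using ha.pow_dvd_of_squarefree_of_pow_succ_dvd_mul_right hp this
  refine ⟨fun hpb hpc => ?_, (hp.dvd_or_dvd hbc).resolve_right⟩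
  -- `p³ ∣ m²` forces `p⁴ ∣ m²`, more than squarefree `a`, `b`, `c` can carry.
  have hpk : p ∣ k := by
    have : p ^ 2 * p ∣ p ^ 2 * k ^ 2 := by
      rw [← mul_pow, ← h, sq]; exact mul_dvd_mul (mul_dvd_mul hpa hpb) hpc
    exact hp.dvd_of_dvd_pow ((mul_dvd_mul_iff_left (pow_ne_zero 2 hp.ne_zero)).1 this)
  have h₄ : p ^ (3 + 1) ∣ a * (b * c) := by
    rw [← mul_assoc, h, show 3 + 1 = 2 * 2 from rfl, pow_mul]
    exact pow_dvd_pow_of_dvd (sq p ▸ mul_dvd_mul_left p hpk) 2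
  have h₃ := ha.pow_dvd_of_squarefree_of_pow_succ_dvd_mul_right hp h₄
  have h₂ := hb.pow_dvd_of_squarefree_of_pow_succ_dvd_mul_right hp h₃
  exact hp.not_isUnit (hc p (sq p ▸ h₂))

end Squarefree

theorem Int.dvd_of_squarefree_of_forall_natPrime_dvd {d b : ℤ} (hd : Squarefree d)
    (h : ∀ p : ℕ, p.Prime → (p : ℤ) ∣ d → (p : ℤ) ∣ b) : d ∣ b :=
  hd.dvd_of_forall_prime_dvd fun q hq hqd =>
    Int.natAbs_dvd.1 (h q.natAbs (Int.prime_iff_natAbs_prime.1 hq) (Int.natAbs_dvd.2 hqd))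

section Descent

variable {α : Type*} [CommMonoidWithZero α] {π a x : α}

theorem Prime.dvd_of_dvd_mul_sq (hπ : Prime π) (ha : ¬ π ∣ a) (h : π ∣ a * x ^ 2) : π ∣ x :=
  hπ.dvd_of_dvd_pow ((hπ.dvd_or_dvd h).resolve_left ha)

theorem Prime.dvd_of_sq_dvd_mul_sq [IsCancelMulZero α] (hπ : Prime π) (ha : ¬ π ^ 2 ∣ a)
    (h : π ^ 2 ∣ a * x ^ 2) : π ∣ x := by
  by_contra hx
  exact ha (hπ.pow_dvd_of_dvd_mul_right 2 (fun h' => hx (hπ.dvd_of_dvd_pow h')) h)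

theorem Prime.dvd_of_diagonal_relations {R : Type*} [CommRing R] [IsDomain R]
    {π a b c s r t x y z : R} (hπ : Prime π) (ha : π ∣ a) (ha₂ : ¬ π ^ 2 ∣ a) (hb : π ∣ b)
    (hb₂ : ¬ π ^ 2 ∣ b) (hc : ¬ π ∣ c) (hs : ¬ π ∣ s)
    (hxy : a * x ^ 2 - b * y ^ 2 = s * t ^ 2) (hxz : a * x ^ 2 - c * z ^ 2 = r * t ^ 2) :
    π ∣ t ∧ π ∣ x ∧ π ∣ y ∧ π ∣ z := by
  have ht : π ∣ t := hπ.dvd_of_dvd_mul_sq hs (hxy ▸ dvd_sub (ha.mul_right _) (hb.mul_right _))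
  have ht₂ : π ^ 2 ∣ t ^ 2 := pow_dvd_pow_of_dvd ht 2
  have hz : π ∣ z := hπ.dvd_of_dvd_mul_sq hc <| by
    rw [show c * z ^ 2 = a * x ^ 2 - r * t ^ 2 by linear_combination -hxz]
    exact dvd_sub (ha.mul_right _) ((ht.trans (dvd_pow_self t two_ne_zero)).mul_left r)
  have hx : π ∣ x := hπ.dvd_of_sq_dvd_mul_sq ha₂ <| by
    rw [show a * x ^ 2 = c * z ^ 2 + r * t ^ 2 by linear_combination hxz]
    exact dvd_add ((pow_dvd_pow_of_dvd hz 2).mul_left c) (ht₂.mul_left r)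
  have hy : π ∣ y := hπ.dvd_of_sq_dvd_mul_sq hb₂ <| by
    rw [show b * y ^ 2 = a * x ^ 2 - s * t ^ 2 by linear_combination -hxy]
    exact dvd_sub ((pow_dvd_pow_of_dvd hx 2).mul_left a) (ht₂.mul_left s)
  exact ⟨ht, hx, hy, hz⟩

end Descent

namespace DLambda

variable {R S : Type*} [CommRing R] [CommRing S]

def IsSolution (n d₁ d₂ d₃ t u₁ u₂ u₃ : R) : Prop :=
  -n * t ^ 2 + d₂ * u₂ ^ 2 - d₃ * u₃ ^ 2 = 0 ∧
  -n * t ^ 2 + d₃ * u₃ ^ 2 - d₁ * u₁ ^ 2 = 0 ∧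
  2 * n * t ^ 2 + d₁ * u₁ ^ 2 - d₂ * u₂ ^ 2 = 0

variable (R) in
def HasNontrivialSolution (n d₁ d₂ d₃ : R) : Prop :=
  ∃ t u₁ u₂ u₃ : R, ¬(t = 0 ∧ u₁ = 0 ∧ u₂ = 0 ∧ u₃ = 0) ∧ IsSolution n d₁ d₂ d₃ t u₁ u₂ u₃

variable {n d₁ d₂ d₃ t u₁ u₂ u₃ : R}

theorem IsSolution.mul (h : IsSolution n d₁ d₂ d₃ t u₁ u₂ u₃) (c : R) :
    IsSolution n d₁ d₂ d₃ (c * t) (c * u₁) (c * u₂) (c * u₃) := by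
  obtain ⟨h₁, h₂, h₃⟩ := h
  exact ⟨by linear_combination c ^ 2 * h₁, by linear_combination c ^ 2 * h₂,
    by linear_combination c ^ 2 * h₃⟩

theorem isSolution_map_iff {f : R →+* S} (hf : Function.Injective f) :
    IsSolution (f n) (f d₁) (f d₂) (f d₃) (f t) (f u₁) (f u₂) (f u₃) ↔
      IsSolution n d₁ d₂ d₃ t u₁ u₂ u₃ := by
  simp only [IsSolution, ← map_pow, ← map_mul, ← map_neg, ← map_ofNat f 2, ← map_add, ← map_sub,
    map_eq_zero_iff f hf]

theorem HasNontrivialSolution.d₂_pos {K : Type*} [CommRing K] [LinearOrder K]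
    [IsStrictOrderedRing K] {n d₁ d₂ d₃ : K} (h : HasNontrivialSolution K n d₁ d₂ d₃)
    (hn : 0 < n) (hd : 0 < d₁ * d₂ * d₃) : 0 < d₂ := by
  obtain ⟨t, u₁, u₂, u₃, hne, h₁, h₂, h₃⟩ := h
  by_contra hd₂
  replace hd₂ : d₂ < 0 := (not_lt.1 hd₂).lt_of_ne (by rintro rfl; simp at hd)
  have hd₁₃ : d₁ * d₃ < 0 := neg_of_mul_pos_right (by linarith) hd₂.le
  have eq_zero {d x : K} (hd : d ≠ 0) (h : d * x ^ 2 = 0) : x = 0 := by simpa [hd] using h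
  have ht := mul_nonneg hn.le (sq_nonneg t)
  have hu₂ := mul_nonpos_of_nonpos_of_nonneg hd₂.le (sq_nonneg u₂)
  rcases mul_neg_iff.1 hd₁₃ with ⟨hd₁, hd₃⟩ | ⟨hd₁, hd₃⟩
  · have hu₁ := mul_nonneg hd₁.le (sq_nonneg u₁)
    exact hne ⟨eq_zero hn.ne' (by linarith), eq_zero hd₁.ne' (by linarith),
      eq_zero hd₂.ne (by linarith), eq_zero hd₃.ne (by linarith)⟩
  · have hu₃ := mul_nonneg hd₃.le (sq_nonneg u₃)
    exact hne ⟨eq_zero hn.ne' (by linarith), eq_zero hd₁.ne (by linarith),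
      eq_zero hd₂.ne (by linarith), eq_zero hd₃.ne' (by linarith)⟩

end DLambda

namespace PadicInt

variable {p : ℕ} [Fact p.Prime]

theorem exists_primitive_multiple {ι : Type*} [Finite ι] (x : ι → ℚ_[p]) (hx : x ≠ 0) :
    ∃ (c : ℚ_[p]) (y : ι → ℤ_[p]), (∀ i, (y i : ℚ_[p]) = c * x i) ∧ ∃ i, y i = 1 := by
  obtain ⟨i₀, -⟩ := Function.ne_iff.1 hx
  have : Nonempty ι := ⟨i₀⟩
  obtain ⟨i, hi⟩ := Finite.exists_max fun j => ‖x j‖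
  have hxi : x i ≠ 0 := fun h0 =>
    hx (funext fun j => norm_le_zero_iff.1 (by simpa [h0] using hi j))
  refine ⟨(x i)⁻¹, fun j => ⟨(x i)⁻¹ * x j, ?_⟩, fun j => rfl, i, ?_⟩
  · rw [norm_mul, norm_inv]
    exact inv_mul_le_one_of_le₀ (hi j) (norm_nonneg _)
  · exact PadicInt.ext (by simp [hxi])

theorem p_dvd_intCast_iff (a : ℤ) : (p : ℤ_[p]) ∣ (a : ℤ_[p]) ↔ (p : ℤ) ∣ a := by
  simpa using pow_p_dvd_int_iff 1 a

theorem not_p_sq_dvd_intCast {a : ℤ} (ha : Squarefree a) : ¬ (p : ℤ_[p]) ^ 2 ∣ (a : ℤ_[p]) := by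
  rw [pow_p_dvd_int_iff, sq]
  exact fun h => (Nat.prime_iff_prime_int.1 Fact.out).not_isUnit (ha _ (by exact_mod_cast h))

theorem p_dvd_of_diagonal_relations {a b c s : ℤ} {r t x y z : ℤ_[p]}
    (ha : Squarefree a) (hb : Squarefree b) (hpa : (p : ℤ) ∣ a) (hpb : (p : ℤ) ∣ b)
    (hpc : ¬ (p : ℤ) ∣ c) (hps : ¬ (p : ℤ) ∣ s)
    (hxy : (a : ℤ_[p]) * x ^ 2 - b * y ^ 2 = s * t ^ 2)
    (hxz : (a : ℤ_[p]) * x ^ 2 - c * z ^ 2 = r * t ^ 2) :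
    (p : ℤ_[p]) ∣ t ∧ (p : ℤ_[p]) ∣ x ∧ (p : ℤ_[p]) ∣ y ∧ (p : ℤ_[p]) ∣ z :=
  prime_p.dvd_of_diagonal_relations ((p_dvd_intCast_iff a).2 hpa) (not_p_sq_dvd_intCast ha)
    ((p_dvd_intCast_iff b).2 hpb) (not_p_sq_dvd_intCast hb) (mt (p_dvd_intCast_iff c).1 hpc)
    (mt (p_dvd_intCast_iff s).1 hps) hxy hxz

end PadicInt

namespace DLambda

variable {p : ℕ} [Fact p.Prime]

theorem HasNontrivialSolution.exists_primitive_padicInt {n d₁ d₂ d₃ : ℤ_[p]}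
    (h : HasNontrivialSolution ℚ_[p] n d₁ d₂ d₃) :
    ∃ t u₁ u₂ u₃ : ℤ_[p], ¬((p : ℤ_[p]) ∣ t ∧ (p : ℤ_[p]) ∣ u₁ ∧ (p : ℤ_[p]) ∣ u₂ ∧
      (p : ℤ_[p]) ∣ u₃) ∧ IsSolution n d₁ d₂ d₃ t u₁ u₂ u₃ := by
  obtain ⟨t, u₁, u₂, u₃, hne, hsol⟩ := h
  obtain ⟨c, y, hy, i, hi⟩ := PadicInt.exists_primitive_multiple ![t, u₁, u₂, u₃]
    (by simpa [funext_iff, Fin.forall_fin_succ] using hne)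
  refine ⟨y 0, y 1, y 2, y 3, fun hdvd => ?_, ?_⟩
  · have : (p : ℤ_[p]) ∣ y i := by fin_cases i <;> simp_all
    exact PadicInt.prime_p.not_dvd_one (hi ▸ this)
  · rw [← isSolution_map_iff (f := PadicInt.Coe.ringHom) Subtype.coe_injective]
    have hy' : ∀ i, PadicInt.Coe.ringHom (y i) = c * ![t, u₁, u₂, u₃] i := hy
    simp only [hy']
    exact hsol.mul c

theorem eq_two_of_hasNontrivialSolution_padic {n : ℕ} {d₁ d₂ d₃ m : ℤ}
    (hsf₁ : Squarefree d₁) (hsf₂ : Squarefree d₂) (hsf₃ : Squarefree d₃)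
    (hm : d₁ * d₂ * d₃ = m ^ 2) (hpn : ¬ (p : ℤ) ∣ n)
    (h : HasNontrivialSolution ℚ_[p] (n : ℚ_[p]) d₁ d₂ d₃) (hpd : (p : ℤ) ∣ d₁ ∨ (p : ℤ) ∣ d₂) :
    p = 2 ∧ (p : ℤ) ∣ d₁ ∧ (p : ℤ) ∣ d₂ := by
  have hp : Prime (p : ℤ) := Nat.prime_iff_prime_int.1 Fact.out
  replace h : HasNontrivialSolution ℚ_[p] ((n : ℤ_[p]) : ℚ_[p]) ((d₁ : ℤ_[p]) : ℚ_[p])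
      ((d₂ : ℤ_[p]) : ℚ_[p]) ((d₃ : ℤ_[p]) : ℚ_[p]) := by
    simpa only [PadicInt.coe_natCast, PadicInt.coe_intCast] using h
  obtain ⟨t, u₁, u₂, u₃, hprim, h₁, h₂, h₃⟩ := h.exists_primitive_padicInt
  have hd₁ := hp.dvd_iff_not_dvd_of_mul_mul_eq_sq hsf₁ hsf₂ hsf₃ hm
  have hd₂ := hp.dvd_iff_not_dvd_of_mul_mul_eq_sq hsf₂ hsf₁ hsf₃ (by rw [← hm]; ring)
  by_cases hp₃ : (p : ℤ) ∣ d₃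
  · exfalso
    rcases hpd with hp₁ | hp₂
    · obtain ⟨ht, hu₁, hu₃, hu₂⟩ := PadicInt.p_dvd_of_diagonal_relations
        (s := -n) (r := -2 * n) (t := t) (x := u₁) (y := u₃) (z := u₂)
        hsf₁ hsf₃ hp₁ hp₃ (fun hp₂ => (hd₁ hp₁).1 hp₂ hp₃) (by rwa [dvd_neg])
        (by push_cast; linear_combination -h₂) (by linear_combination h₃)
      exact hprim ⟨ht, hu₁, hu₂, hu₃⟩
    · obtain ⟨ht, hu₂, hu₃, hu₁⟩ := PadicInt.p_dvd_of_diagonal_relations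
        (s := n) (r := 2 * n) (t := t) (x := u₂) (y := u₃) (z := u₁)
        hsf₂ hsf₃ hp₂ hp₃ (fun hp₁ => (hd₂ hp₂).1 hp₁ hp₃) hpn
        (by push_cast; linear_combination h₁) (by linear_combination -h₃)
      exact hprim ⟨ht, hu₁, hu₂, hu₃⟩
  have hp₁₂ : (p : ℤ) ∣ d₁ ∧ (p : ℤ) ∣ d₂ := by
    rcases hpd with hp₁ | hp₂
    · exact ⟨hp₁, (hd₁ hp₁).2 hp₃⟩
    · exact ⟨(hd₂ hp₂).2 hp₃, hp₂⟩
  refine ⟨by_contra fun hp2 => ?_, hp₁₂⟩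
  have hp2n : ¬ (p : ℤ) ∣ -(2 * n) := by
    rw [dvd_neg]
    refine fun h2n => (hp.dvd_or_dvd h2n).elim (fun h2 => hp2 ?_) hpn
    exact (Nat.prime_dvd_prime_iff_eq Fact.out Nat.prime_two).1 (by exact_mod_cast h2)
  obtain ⟨ht, hu₁, hu₂, hu₃⟩ := PadicInt.p_dvd_of_diagonal_relations
    (s := -(2 * n)) (r := -n) (t := t) (x := u₁) (y := u₂) (z := u₃)
    hsf₁ hsf₂ hp₁₂.1 hp₁₂.2 (fun hp₃' => (hd₁ hp₁₂.1).1 hp₁₂.2 hp₃') hp2n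
    (by push_cast; linear_combination h₃) (by linear_combination -h₂)
  exact hprim ⟨ht, hu₁, hu₂, hu₃⟩

end DLambda

theorem stmt_0_general (n : ℕ) (hnpos : 0 < n) (hnodd : Odd n)
    (d₁ d₂ d₃ : ℤ) (hd₁ : d₁ ≠ 0) (hd₂ : d₂ ≠ 0) (hd₃ : d₃ ≠ 0)
    (hsf₁ : Squarefree d₁) (hsf₂ : Squarefree d₂) (hsf₃ : Squarefree d₃)
    (hsq : ∃ m : ℤ, d₁ * d₂ * d₃ = m ^ 2)
    (hR : ∃ t u₁ u₂ u₃ : ℝ, ¬(t = 0 ∧ u₁ = 0 ∧ u₂ = 0 ∧ u₃ = 0) ∧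
      -(n : ℝ) * t ^ 2 + (d₂ : ℝ) * u₂ ^ 2 - (d₃ : ℝ) * u₃ ^ 2 = 0 ∧
      -(n : ℝ) * t ^ 2 + (d₃ : ℝ) * u₃ ^ 2 - (d₁ : ℝ) * u₁ ^ 2 = 0 ∧
      2 * (n : ℝ) * t ^ 2 + (d₁ : ℝ) * u₁ ^ 2 - (d₂ : ℝ) * u₂ ^ 2 = 0)
    (hQp : ∀ (p : ℕ) [Fact p.Prime], ∃ t u₁ u₂ u₃ : ℚ_[p],
      ¬(t = 0 ∧ u₁ = 0 ∧ u₂ = 0 ∧ u₃ = 0) ∧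
      -(n : ℚ_[p]) * t ^ 2 + (d₂ : ℚ_[p]) * u₂ ^ 2 - (d₃ : ℚ_[p]) * u₃ ^ 2 = 0 ∧
      -(n : ℚ_[p]) * t ^ 2 + (d₃ : ℚ_[p]) * u₃ ^ 2 - (d₁ : ℚ_[p]) * u₁ ^ 2 = 0 ∧
      2 * (n : ℚ_[p]) * t ^ 2 + (d₁ : ℚ_[p]) * u₁ ^ 2 - (d₂ : ℚ_[p]) * u₂ ^ 2 = 0) :
    0 < d₂ ∧ d₁ ∣ 2 * (n : ℤ) ∧ d₂ ∣ 2 * (n : ℤ) ∧ d₁ % 2 = d₂ % 2 := by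
  obtain ⟨m, hm⟩ := hsq
  have hprod : 0 < d₁ * d₂ * d₃ :=
    lt_of_le_of_ne (hm ▸ sq_nonneg m) (mul_ne_zero (mul_ne_zero hd₁ hd₂) hd₃).symm
  have hd₂_pos : (0 : ℝ) < d₂ := DLambda.HasNontrivialSolution.d₂_pos (K := ℝ) hR
    (by exact_mod_cast hnpos) (by exact_mod_cast hprod)
  have hlocal (p : ℕ) (hp : p.Prime) (hpn : ¬ (p : ℤ) ∣ n) (hpd : (p : ℤ) ∣ d₁ ∨ (p : ℤ) ∣ d₂) :
      p = 2 ∧ (p : ℤ) ∣ d₁ ∧ (p : ℤ) ∣ d₂ :=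
    have : Fact p.Prime := ⟨hp⟩
    DLambda.eq_two_of_hasNontrivialSolution_padic hsf₁ hsf₂ hsf₃ hm hpn (hQp p) hpd
  have hdvd (p : ℕ) (hp : p.Prime) (hpd : (p : ℤ) ∣ d₁ ∨ (p : ℤ) ∣ d₂) : (p : ℤ) ∣ 2 * n := by
    by_cases hpn : (p : ℤ) ∣ n
    · exact hpn.mul_left 2
    · rw [(hlocal p hp hpn hpd).1]
      exact dvd_mul_right _ _
  have h2n : ¬ ((2 : ℕ) : ℤ) ∣ n := by
    obtain ⟨k, rfl⟩ := hnodd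
    omega
  have h2₁ := fun h => (hlocal 2 Nat.prime_two h2n (.inl h)).2.2
  have h2₂ := fun h => (hlocal 2 Nat.prime_two h2n (.inr h)).2.1
  refine ⟨by exact_mod_cast hd₂_pos,
    Int.dvd_of_squarefree_of_forall_natPrime_dvd hsf₁ fun p hp h => hdvd p hp (.inl h),
    Int.dvd_of_squarefree_of_forall_natPrime_dvd hsf₂ fun p hp h => hdvd p hp (.inr h), ?_⟩
  push_cast at h2₁ h2₂
  omega

/-- If the genus-one curve `D_Λ` attached to a triple `Λ = (d₁, d₂, d₃)` of
nonzero squarefree integers with square product is locally solvable over `ℝ` and over every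
`ℚ_p`, then `d₂ > 0`, `d₁ ∣ 2n`, `d₂ ∣ 2n` and `d₁ ≡ d₂ (mod 2)`. -/
theorem stmt_0 (n : ℕ) (hnpos : 0 < n) (hnodd : Odd n) (hnsf : Squarefree n)
    (d₁ d₂ d₃ : ℤ) (hd₁ : d₁ ≠ 0) (hd₂ : d₂ ≠ 0) (hd₃ : d₃ ≠ 0)
    (hsf₁ : Squarefree d₁) (hsf₂ : Squarefree d₂) (hsf₃ : Squarefree d₃)
    (hsq : ∃ m : ℤ, d₁ * d₂ * d₃ = m ^ 2)
    (hR : ∃ t u₁ u₂ u₃ : ℝ, ¬(t = 0 ∧ u₁ = 0 ∧ u₂ = 0 ∧ u₃ = 0) ∧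
      -(n : ℝ) * t ^ 2 + (d₂ : ℝ) * u₂ ^ 2 - (d₃ : ℝ) * u₃ ^ 2 = 0 ∧
      -(n : ℝ) * t ^ 2 + (d₃ : ℝ) * u₃ ^ 2 - (d₁ : ℝ) * u₁ ^ 2 = 0 ∧
      2 * (n : ℝ) * t ^ 2 + (d₁ : ℝ) * u₁ ^ 2 - (d₂ : ℝ) * u₂ ^ 2 = 0)
    (hQp : ∀ (p : ℕ) [Fact p.Prime], ∃ t u₁ u₂ u₃ : ℚ_[p],
      ¬(t = 0 ∧ u₁ = 0 ∧ u₂ = 0 ∧ u₃ = 0) ∧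
      -(n : ℚ_[p]) * t ^ 2 + (d₂ : ℚ_[p]) * u₂ ^ 2 - (d₃ : ℚ_[p]) * u₃ ^ 2 = 0 ∧
      -(n : ℚ_[p]) * t ^ 2 + (d₃ : ℚ_[p]) * u₃ ^ 2 - (d₁ : ℚ_[p]) * u₁ ^ 2 = 0 ∧
      2 * (n : ℚ_[p]) * t ^ 2 + (d₁ : ℚ_[p]) * u₁ ^ 2 - (d₂ : ℚ_[p]) * u₂ ^ 2 = 0) :
    0 < d₂ ∧ d₁ ∣ 2 * (n : ℤ) ∧ d₂ ∣ 2 * (n : ℤ) ∧ d₁ % 2 = d₂ % 2 :=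
  stmt_0_general n hnpos hnodd d₁ d₂ d₃ hd₁ hd₂ hd₃ hsf₁ hsf₂ hsf₃ hsq hR hQp
end

section
/- Let n be an odd positive squarefree integer and let d1, d2, d3 be nonzero squarefree integers with d1·d2·d3 a perfect square, d2 > 0, d1 | 2n, d2 | 2n and d1 ≡ d2 (mod 2). Then there is exactly one triple Λ0 in the set {(2, 2n, n), (−2n, 2, −n), (−n, n, −1), (1, 1, 1)} such that the coordinatewise product (d1,d2,d3)·Λ0, after replacing each coordinate by its squarefree part, equals a triple (e1,e2,e3) with e1 > 0, e2 > 0, e1 | n and e2 | n. -/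
/-- `e` is the squarefree part of the nonzero integer `m`: `e` is squarefree and
`m = e·s²` for some positive integer `s`. -/
def IsSquarefreePart (m e : ℤ) : Prop :=
  Squarefree e ∧ ∃ s : ℤ, 0 < s ∧ m = e * s ^ 2

lemma squarefree_neg' {a : ℤ} (h : Squarefree a) : Squarefree (-a) :=
  fun x hx => h x ((dvd_neg).mp hx)

lemma sqfp_exists (m : ℤ) (hm : m ≠ 0) : ∃ e, IsSquarefreePart m e := by
  obtain ⟨a, b, h, hsf⟩ := Nat.sq_mul_squarefree m.natAbs
  have hb : 0 < b := by
    rcases Nat.eq_zero_or_pos b with rfl | hb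
    · simp at h; omega
    · exact hb
  have hZ : (m.natAbs : ℤ) = (a : ℤ) * (b : ℤ) ^ 2 := by
    rw [← h]; push_cast; ring
  have hsfZ : Squarefree (a : ℤ) := Int.squarefree_natCast.mpr hsf
  rcases m.natAbs_eq with hme | hme
  · exact ⟨a, hsfZ, b, by exact_mod_cast hb, by rw [hme, hZ]⟩
  · exact ⟨-a, squarefree_neg' hsfZ, b, by exact_mod_cast hb, by rw [hme, hZ]; ring⟩

lemma sqfp_neg {m e : ℤ} (h : IsSquarefreePart m e) (hm : m < 0) : e < 0 := by
  obtain ⟨_, s, hs, rfl⟩ := h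
  nlinarith

lemma sqfp_two_dvd {m e : ℤ} (h : IsSquarefreePart m e) (h2 : 2 ∣ m) (h4 : ¬ (4:ℤ) ∣ m) :
    2 ∣ e := by
  obtain ⟨hsf, s, hs, rfl⟩ := h
  rcases Int.even_or_odd s with hes | hos
  · obtain ⟨t, rfl⟩ := hes
    exact absurd ⟨e * t ^ 2, by ring⟩ h4
  · by_contra he
    have ho : Odd e := Int.not_even_iff_odd.mp (fun hev => he hev.two_dvd)
    have : Odd (e * s ^ 2) := ho.mul (hos.pow)
    exact (Int.not_odd_iff_even.mpr (even_iff_two_dvd.mpr h2)) this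

lemma odd_dvd_of_dvd_two_mul {d n : ℤ} (hd : ¬ (2:ℤ) ∣ d) (h : d ∣ 2 * n) : d ∣ n := by
  have hc : IsCoprime (2 : ℤ) d := (Int.prime_two.coprime_iff_not_dvd).mpr hd
  exact hc.symm.dvd_of_dvd_mul_left h

lemma not_two_dvd_of_sf {a : ℤ} (h : Squarefree (2 * a)) : ¬ (2:ℤ) ∣ a := by
  rintro ⟨c, rfl⟩
  have := h 2 ⟨c, by ring⟩
  rw [Int.isUnit_iff] at this
  omega

lemma two_not_dvd_mul {a b : ℤ} (ha : ¬ (2:ℤ) ∣ a) (hb : ¬ (2:ℤ) ∣ b) : ¬ (2:ℤ) ∣ a * b :=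
  fun h => ((Int.prime_two.dvd_mul).mp h).elim ha hb

lemma not_four_dvd_of_sf {d : ℤ} (h : Squarefree d) : ¬ (4:ℤ) ∣ d := by
  intro h4
  have := h 2 (dvd_trans ⟨1, by norm_num⟩ h4)
  rw [Int.isUnit_iff] at this
  omega

/-- there is exactly one 2-torsion triple `Λ₀` such that the coordinatewise
product `(d₁,d₂,d₃)·Λ₀`, with each coordinate replaced by its squarefree part, has the form
`(e₁,e₂,e₃)` with `e₁ > 0`, `e₂ > 0`, `e₁ ∣ n` and `e₂ ∣ n`. -/
theorem stmt_1 (n : ℕ) (hnpos : 0 < n) (hnodd : Odd n) (hnsf : Squarefree n)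
    (d₁ d₂ d₃ : ℤ) (hd₁ : d₁ ≠ 0) (hd₂ : d₂ ≠ 0) (hd₃ : d₃ ≠ 0)
    (hsf₁ : Squarefree d₁) (hsf₂ : Squarefree d₂) (hsf₃ : Squarefree d₃)
    (hsq : ∃ m : ℤ, d₁ * d₂ * d₃ = m ^ 2)
    (hd₂pos : 0 < d₂) (hdvd₁ : d₁ ∣ 2 * (n : ℤ)) (hdvd₂ : d₂ ∣ 2 * (n : ℤ))
    (hpar : d₁ % 2 = d₂ % 2) :
    ∃! Λ₀ : ℤ × ℤ × ℤ,
      Λ₀ ∈ ({((2 : ℤ), (2 * (n : ℤ), (n : ℤ))), (-2 * (n : ℤ), (2, -(n : ℤ))),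
              (-(n : ℤ), ((n : ℤ), -1)), (1, (1, 1))} : Set (ℤ × ℤ × ℤ)) ∧
      ∃ e₁ e₂ e₃ : ℤ,
        IsSquarefreePart (d₁ * Λ₀.1) e₁ ∧ IsSquarefreePart (d₂ * Λ₀.2.1) e₂ ∧
        IsSquarefreePart (d₃ * Λ₀.2.2) e₃ ∧
        0 < e₁ ∧ 0 < e₂ ∧ e₁ ∣ (n : ℤ) ∧ e₂ ∣ (n : ℤ) := by
  have hnZ : (0:ℤ) < (n:ℤ) := by exact_mod_cast hnpos
  have hnodd' : n % 2 = 1 := Nat.odd_iff.mp hnodd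
  have hnoddZ : ¬ (2:ℤ) ∣ (n:ℤ) := by omega
  have hnsfZ : Squarefree ((n:ℕ) : ℤ) := Int.squarefree_natCast.mpr hnsf
  have noED : ∀ e : ℤ, 2 ∣ e → e ∣ (n:ℤ) → False := fun e h2 hdn => hnoddZ (h2.trans hdn)
  rcases Int.even_or_odd d₁ with hev | hod
  · -- even case
    have h2d₁ : (2:ℤ) ∣ d₁ := hev.two_dvd
    have h2d₂ : (2:ℤ) ∣ d₂ := by omega
    obtain ⟨a, rfl⟩ := h2d₁
    obtain ⟨b, rfl⟩ := h2d₂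
    have ha2 : ¬ (2:ℤ) ∣ a := not_two_dvd_of_sf hsf₁
    have hb2 : ¬ (2:ℤ) ∣ b := not_two_dvd_of_sf hsf₂
    have han : a ∣ (n:ℤ) := (mul_dvd_mul_iff_left (two_ne_zero (α := ℤ))).mp hdvd₁
    have hbn : b ∣ (n:ℤ) := (mul_dvd_mul_iff_left (two_ne_zero (α := ℤ))).mp hdvd₂
    have hbpos : 0 < b := by linarith
    rcases (lt_or_gt_of_ne hd₁) with hneg | hpos
    · -- d₁ < 0, witness (-2n, 2, -n)
      have hapos : a < 0 := by linarith
      obtain ⟨k, hk⟩ := han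
      have hkneg : k < 0 := by nlinarith
      refine ⟨(-2 * (n:ℤ), (2, -(n:ℤ))), ⟨by simp, ?_⟩, ?_⟩
      · obtain ⟨e₃, he₃⟩ := sqfp_exists (d₃ * (-(n:ℤ))) (by
          exact mul_ne_zero hd₃ (by omega))
        refine ⟨-k, b, e₃,
          ⟨hnsfZ.squarefree_of_dvd ⟨-a, by linear_combination hk⟩, -2 * a, by omega,
            by linear_combination (-4*a) * hk⟩,
          ⟨hsf₂.squarefree_of_dvd ⟨2, by ring⟩, 2, by norm_num, by ring⟩, he₃,
          by omega, hbpos, ⟨-a, by linear_combination hk⟩, hbn⟩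
      · rintro ⟨p1, p2, p3⟩ ⟨hmem, e₁, e₂, e₃, he1, he2, he3, hp1, hp2, hq1, hq2⟩
        dsimp only at he1 he2 he3
        simp only [Set.mem_insert_iff, Set.mem_singleton_iff, Prod.mk.injEq] at hmem
        rcases hmem with ⟨rfl, rfl, rfl⟩ | ⟨rfl, rfl, rfl⟩ | ⟨rfl, rfl, rfl⟩ | ⟨rfl, rfl, rfl⟩
        · -- (2, 2n, n) : m = 2a*2 < 0
          have := sqfp_neg he1 (by nlinarith [hnZ])
          omega
        · rfl
        · -- (-n, n, -1) : m = 2a*(-n), even, not div by 4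
          have h4m : ¬ (4:ℤ) ∣ 2 * a * (-(n:ℤ)) := by
            rintro ⟨c, hc⟩
            refine two_not_dvd_mul ha2 hnoddZ ⟨-c, ?_⟩
            have h5 : (2:ℤ) * (a * (n:ℤ)) = 2 * (2 * -c) := by linear_combination -hc
            linarith [mul_left_cancel₀ (two_ne_zero (α := ℤ)) h5]
          exact absurd hq1 (fun hq => noED e₁ (sqfp_two_dvd he1 ⟨a * (-(n:ℤ)), by ring⟩ h4m) hq)
        · -- (1,1,1) : m = 2a < 0
          have := sqfp_neg he1 (by nlinarith [hnZ])
          omega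
    · -- d₁ > 0, witness (2, 2n, n)
      have hapos : 0 < a := by linarith
      obtain ⟨k, hk⟩ := hbn
      have hkpos : 0 < k := by nlinarith
      refine ⟨((2:ℤ), (2 * (n:ℤ), (n:ℤ))), ⟨by simp, ?_⟩, ?_⟩
      · obtain ⟨e₃, he₃⟩ := sqfp_exists (d₃ * (n:ℤ)) (mul_ne_zero hd₃ (by omega))
        refine ⟨a, k, e₃, ⟨hsf₁.squarefree_of_dvd ⟨2, by ring⟩, 2, by norm_num, by ring⟩,
          ⟨hnsfZ.squarefree_of_dvd ⟨b, by linear_combination hk⟩, 2 * b, by omega,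
            by linear_combination (4*b) * hk⟩, he₃,
          hapos, hkpos, han, ⟨b, by linear_combination hk⟩⟩
      · rintro ⟨p1, p2, p3⟩ ⟨hmem, e₁, e₂, e₃, he1, he2, he3, hp1, hp2, hq1, hq2⟩
        dsimp only at he1 he2 he3
        simp only [Set.mem_insert_iff, Set.mem_singleton_iff, Prod.mk.injEq] at hmem
        rcases hmem with ⟨rfl, rfl, rfl⟩ | ⟨rfl, rfl, rfl⟩ | ⟨rfl, rfl, rfl⟩ | ⟨rfl, rfl, rfl⟩
        · rfl
        · have := sqfp_neg he1 (by nlinarith [hnZ])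
          omega
        · have := sqfp_neg he1 (by nlinarith [hnZ])
          omega
        · -- (1,1,1) : m = 2a*1, even, not div by 4
          have h4m : ¬ (4:ℤ) ∣ 2 * a * 1 := by
            rw [mul_one]
            exact not_four_dvd_of_sf hsf₁
          exact absurd hq1 (fun hq => noED e₁ (sqfp_two_dvd he1 ⟨a, by ring⟩ h4m) hq)
  · -- odd case
    have h2d₁ : ¬ (2:ℤ) ∣ d₁ := by
      obtain ⟨m, hm⟩ := hod; omega
    have h2d₂ : ¬ (2:ℤ) ∣ d₂ := by
      obtain ⟨m, hm⟩ := hod; omega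
    have hdn1 : d₁ ∣ (n:ℤ) := odd_dvd_of_dvd_two_mul h2d₁ hdvd₁
    have hdn2 : d₂ ∣ (n:ℤ) := odd_dvd_of_dvd_two_mul h2d₂ hdvd₂
    rcases (lt_or_gt_of_ne hd₁) with hneg | hpos
    · -- d₁ < 0, witness (-n, n, -1)
      obtain ⟨k, hk⟩ := hdn1
      obtain ⟨k₂, hk₂⟩ := hdn2
      have hkneg : k < 0 := by nlinarith
      have hk₂pos : 0 < k₂ := by nlinarith
      refine ⟨(-(n:ℤ), ((n:ℤ), -1)), ⟨by simp, ?_⟩, ?_⟩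
      · obtain ⟨e₃, he₃⟩ := sqfp_exists (d₃ * (-1)) (by simpa using hd₃)
        refine ⟨-k, k₂, e₃,
          ⟨hnsfZ.squarefree_of_dvd ⟨-d₁, by linear_combination hk⟩, -d₁, by omega,
            by linear_combination (-d₁) * hk⟩,
          ⟨hnsfZ.squarefree_of_dvd ⟨d₂, by linear_combination hk₂⟩, d₂, hd₂pos,
            by linear_combination d₂ * hk₂⟩, he₃,
          by omega, hk₂pos, ⟨-d₁, by linear_combination hk⟩, ⟨d₂, by linear_combination hk₂⟩⟩
      · rintro ⟨p1, p2, p3⟩ ⟨hmem, e₁, e₂, e₃, he1, he2, he3, hp1, hp2, hq1, hq2⟩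
        dsimp only at he1 he2 he3
        simp only [Set.mem_insert_iff, Set.mem_singleton_iff, Prod.mk.injEq] at hmem
        rcases hmem with ⟨rfl, rfl, rfl⟩ | ⟨rfl, rfl, rfl⟩ | ⟨rfl, rfl, rfl⟩ | ⟨rfl, rfl, rfl⟩
        · have := sqfp_neg he1 (by nlinarith [hnZ])
          omega
        · -- (-2n, 2, -n) : m = d₁*(-2n) > 0, even, not div by 4
          have h4m : ¬ (4:ℤ) ∣ d₁ * (-2 * (n:ℤ)) := by
            rintro ⟨c, hc⟩
            refine two_not_dvd_mul h2d₁ hnoddZ ⟨-c, ?_⟩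
            have h5 : (2:ℤ) * (d₁ * (n:ℤ)) = 2 * (2 * -c) := by linear_combination -hc
            linarith [mul_left_cancel₀ (two_ne_zero (α := ℤ)) h5]
          exact absurd hq1 (fun hq => noED e₁ (sqfp_two_dvd he1 ⟨d₁ * (-(n:ℤ)), by ring⟩ h4m) hq)
        · rfl
        · have := sqfp_neg he1 (by nlinarith [hnZ])
          omega
    · -- d₁ > 0, witness (1,1,1)
      refine ⟨(1, (1, 1)), ⟨by simp, ?_⟩, ?_⟩
      · obtain ⟨e₃, he₃⟩ := sqfp_exists (d₃ * 1) (by simpa using hd₃)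
        refine ⟨d₁, d₂, e₃, ⟨hsf₁, 1, one_pos, by ring⟩, ⟨hsf₂, 1, one_pos, by ring⟩, he₃,
          hpos, hd₂pos, hdn1, hdn2⟩
      · rintro ⟨p1, p2, p3⟩ ⟨hmem, e₁, e₂, e₃, he1, he2, he3, hp1, hp2, hq1, hq2⟩
        dsimp only at he1 he2 he3
        simp only [Set.mem_insert_iff, Set.mem_singleton_iff, Prod.mk.injEq] at hmem
        rcases hmem with ⟨rfl, rfl, rfl⟩ | ⟨rfl, rfl, rfl⟩ | ⟨rfl, rfl, rfl⟩ | ⟨rfl, rfl, rfl⟩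
        · -- (2, 2n, n) : m = d₁*2, even, not div by 4
          have h4m : ¬ (4:ℤ) ∣ d₁ * 2 := by
            rintro ⟨c, hc⟩
            have h5 : (2:ℤ) * d₁ = 2 * (2 * c) := by linear_combination hc
            exact h2d₁ ⟨c, mul_left_cancel₀ (two_ne_zero (α := ℤ)) h5⟩
          exact absurd hq1 (fun hq => noED e₁ (sqfp_two_dvd he1 ⟨d₁, by ring⟩ h4m) hq)
        · have := sqfp_neg he1 (by nlinarith [hnZ])
          omega
        · have := sqfp_neg he1 (by nlinarith [hnZ])
          omega
        · rfl
end

section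
/- Let n = p1⋯pk be a positive squarefree integer with n ≡ 1 (mod 8) and all prime factors p_i ≡ 1 (mod 4). Then the Monsky matrix M_n has rank 2k − 2 over F_2 if and only if the Rédei matrix R = (A | B) has rank k − 1 over F_2, where B = ([2/p_1], …, [2/p_k])^T. -/
open Classical in
/-- The additive Legendre symbol `[a/p] ∈ F₂`: `0` if `a` is a square mod `p`, `1` otherwise. -/
noncomputable def aLeg (a : ℤ) (p : ℕ) : ZMod 2 :=
  if IsSquare ((a : ZMod p)) then 0 else 1

/-- The matrix `A`: `a_{ij} = [p_j/p_i]` for `i ≠ j` and `a_{ii} = Σ_{l ≠ i} [p_l/p_i]`. -/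
noncomputable def monskyA (k : ℕ) (p : Fin k → ℕ) : Matrix (Fin k) (Fin k) (ZMod 2) :=
  Matrix.of fun i j =>
    if i = j then ∑ l ∈ Finset.univ.filter (· ≠ i), aLeg (p l) (p i) else aLeg (p j) (p i)

/-- The diagonal matrix `D_u = diag([u/p₁], …, [u/p_k])`. -/
noncomputable def monskyD (k : ℕ) (p : Fin k → ℕ) (u : ℤ) : Matrix (Fin k) (Fin k) (ZMod 2) :=
  Matrix.diagonal fun i => aLeg u (p i)

/-- The Monsky matrix `M_n = [[A + D₋₂, D₂], [D₂, A + D₂]]`. -/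
noncomputable def monskyM (k : ℕ) (p : Fin k → ℕ) :
    Matrix (Fin k ⊕ Fin k) (Fin k ⊕ Fin k) (ZMod 2) :=
  Matrix.fromBlocks (monskyA k p + monskyD k p (-2)) (monskyD k p 2)
    (monskyD k p 2) (monskyA k p + monskyD k p 2)

/-!
Since every `pᵢ ≡ 1 (mod 4)`, quadratic reciprocity makes `A` symmetric, `D₋₂ = D₂ =: D`, and the
all-ones vector `𝟙` lies in `ker A`; `n ≡ 1 (mod 8)` gives `d ⬝ 𝟙 = 0` for the Rédei column
`d = D𝟙 = B`. Over `F₂` the Monsky matrix is equivalent to `N = [[A, D], [0, A]]`, whose kernel has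
dimension `dim ker A + dim W` with `W = {x ∈ ker A | Dx ∈ im A}`, while `rank (A | d)` is `rank A`
or `rank A + 1` according as `d ∈ im A = (ker A)^⊥` or not. If `d ∈ im A` then `𝟙 ∈ W`, and both
conditions say `dim ker A = 1`. Otherwise some `u ∈ ker A` has `d ⬝ u ≠ 0`, so `dim ker A ≥ 2`, and
when `ker A = ⟨𝟙, u⟩` the symmetry of `(x, y) ↦ Dx ⬝ y` forces `W = 0`.
-/

lemma aLeg_comm {p q : ℕ} (hp : p.Prime) (hq : q.Prime) (hp4 : p % 4 = 1) (hq4 : q % 4 = 1) :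
    aLeg q p = aLeg p q := by
  have : Fact p.Prime := ⟨hp⟩
  have : Fact q.Prime := ⟨hq⟩
  simp only [aLeg, Int.cast_natCast,
    ZMod.exists_sq_eq_prime_iff_of_mod_four_eq_one hp4 (by omega : q ≠ 2)]

lemma aLeg_two {p : ℕ} (hp : p.Prime) (hp4 : p % 4 = 1) :
    aLeg 2 p = if p % 8 = 5 then 1 else 0 := by
  have : Fact p.Prime := ⟨hp⟩
  have h := ZMod.exists_sq_eq_two_iff (p := p) (by omega)
  simp only [aLeg, Int.cast_ofNat, h]
  split_ifs <;> first | rfl | omega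

lemma aLeg_neg_two {p : ℕ} (hp : p.Prime) (hp4 : p % 4 = 1) : aLeg (-2) p = aLeg 2 p := by
  have : Fact p.Prime := ⟨hp⟩
  have h := ZMod.exists_sq_eq_neg_two_iff (p := p) (by omega)
  rw [aLeg_two hp hp4]
  simp only [aLeg, Int.cast_neg, Int.cast_ofNat, h]
  split_ifs <;> first | rfl | omega

lemma ite_mul_mod_eight_eq_five {a b : ℕ} (ha : a % 4 = 1) (hb : b % 4 = 1) :
    (if a * b % 8 = 5 then (1 : ZMod 2) else 0) =
      (if a % 8 = 5 then 1 else 0) + (if b % 8 = 5 then 1 else 0) := by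
  have hab : a * b % 8 = a % 8 * (b % 8) % 8 := Nat.mul_mod a b 8
  have ha8 : a % 8 = 1 ∨ a % 8 = 5 := by omega
  have hb8 : b % 8 = 1 ∨ b % 8 = 5 := by omega
  rcases ha8 with ha8 | ha8 <;> rcases hb8 with hb8 | hb8 <;>
    simp [hab, ha8, hb8, CharTwo.add_self_eq_zero]

lemma ite_prod_mod_eight_eq_five {ι : Type*} (s : Finset ι) (p : ι → ℕ)
    (hp4 : ∀ i ∈ s, p i % 4 = 1) :
    (if (∏ i ∈ s, p i) % 8 = 5 then (1 : ZMod 2) else 0) =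
      ∑ i ∈ s, if p i % 8 = 5 then 1 else 0 := by
  classical
  induction s using Finset.induction_on with
  | empty => simp
  | insert a s ha ih =>
    have hs : (∏ i ∈ s, p i) % 4 = 1 := by
      refine Finset.prod_induction _ (· % 4 = 1) (fun x y hx hy => ?_) rfl
        fun i hi => hp4 i (Finset.mem_insert_of_mem hi)
      rw [Nat.mul_mod, hx, hy]
    rw [Finset.prod_insert ha, Finset.sum_insert ha,
      ite_mul_mod_eight_eq_five (hp4 a (by simp)) hs, ih fun i hi => hp4 i (by simp [hi])]

lemma sum_aLeg_two {ι : Type*} (s : Finset ι) {p : ι → ℕ} (hp : ∀ i ∈ s, (p i).Prime)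
    (hp4 : ∀ i ∈ s, p i % 4 = 1) :
    ∑ i ∈ s, aLeg 2 (p i) = if (∏ i ∈ s, p i) % 8 = 5 then 1 else 0 := by
  rw [ite_prod_mod_eight_eq_five s p hp4]
  exact Finset.sum_congr rfl fun i hi => aLeg_two (hp i hi) (hp4 i hi)

open Matrix Module LinearMap Submodule

namespace Matrix

variable {K : Type*} [Field K] {m n n' m' : Type*} [Fintype n]

theorem mem_range_mulVecLin_transpose_iff [Fintype m] [DecidableEq m] [DecidableEq n]
    (M : Matrix m n K) (v : n → K) :
    v ∈ range Mᵀ.mulVecLin ↔ ∀ u ∈ ker M.mulVecLin, v ⬝ᵥ u = 0 := by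
  have hdual (x : m → K) :
      dotProductEquiv K n (Mᵀ *ᵥ x) = M.mulVecLin.dualMap (dotProductEquiv K m x) :=
    LinearMap.ext fun u => by simp [dotProduct_mulVec, mulVec_transpose]
  have key : v ∈ range Mᵀ.mulVecLin ↔ dotProductEquiv K n v ∈ range M.mulVecLin.dualMap := by
    constructor
    · rintro ⟨x, rfl⟩
      exact ⟨_, (hdual x).symm⟩
    · rintro ⟨φ, hφ⟩
      obtain ⟨x, rfl⟩ := (dotProductEquiv K m).surjective φ
      exact ⟨x, (dotProductEquiv K n).injective ((hdual x).trans hφ)⟩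
  rw [key, range_dualMap_eq_dualAnnihilator_ker, mem_dualAnnihilator]
  simp

theorem IsSymm.mem_range_mulVecLin_iff [DecidableEq n] {A : Matrix n n K} (hA : A.IsSymm)
    (v : n → K) : v ∈ range A.mulVecLin ↔ ∀ u ∈ ker A.mulVecLin, v ⬝ᵥ u = 0 := by
  simpa only [hA.eq] using mem_range_mulVecLin_transpose_iff A v

theorem IsSymm.dotProduct_mulVec_comm {D : Matrix n n K} (hD : D.IsSymm) (x y : n → K) :
    D *ᵥ x ⬝ᵥ y = D *ᵥ y ⬝ᵥ x := by
  rw [dotProduct_comm, dotProduct_mulVec, ← mulVec_transpose, hD.eq]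

theorem range_mulVecLin_fromCols_replicateCol (A : Matrix m n K) (d : m → K) :
    range (fromCols A (replicateCol Unit d)).mulVecLin = range A.mulVecLin ⊔ K ∙ d := by
  have hcol : (fromCols A (replicateCol Unit d)).col = Sum.elim A.col fun _ => d := by
    ext (j | j) i <;> rfl
  rw [range_mulVecLin, range_mulVecLin, hcol, Set.Sum.elim_range, Set.range_const, span_union]

theorem rank_fromCols_replicateCol_of_mem {A : Matrix m n K} {d : m → K}
    (hd : d ∈ range A.mulVecLin) : (fromCols A (replicateCol Unit d)).rank = A.rank := by
  rw [rank, range_mulVecLin_fromCols_replicateCol,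
    sup_eq_left.mpr ((span_singleton_le_iff_mem _ _).mpr hd), rank]

theorem rank_fromCols_replicateCol_of_notMem [Finite m] {A : Matrix m n K} {d : m → K}
    (hd : d ∉ range A.mulVecLin) : (fromCols A (replicateCol Unit d)).rank = A.rank + 1 := by
  rw [rank, range_mulVecLin_fromCols_replicateCol, finrank_sup_span_singleton hd, rank]

theorem fromBlocks_zero₂₁_mulVec_eq_zero_iff [Fintype n'] (A : Matrix m n K)
    (B : Matrix m n' K) (C : Matrix m' n' K) (v : n ⊕ n' → K) :
    fromBlocks A B 0 C *ᵥ v = 0 ↔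
      A *ᵥ (v ∘ Sum.inl) + B *ᵥ (v ∘ Sum.inr) = 0 ∧ C *ᵥ (v ∘ Sum.inr) = 0 := by
  rw [fromBlocks_mulVec, zero_mulVec, zero_add, ← Sum.elim_zero_zero, Sum.elim_eq_iff]

/-- `v ↦ v ∘ Sum.inr` maps `ker [[A, B], [0, C]]` onto `ker C ⊓ B⁻¹(im A)`, with kernel `ker A`. -/
theorem finrank_ker_fromBlocks_zero₂₁ [Fintype n'] (A : Matrix m n K) (B : Matrix m n' K)
    (C : Matrix m' n' K) :
    finrank K (ker (fromBlocks A B 0 C).mulVecLin) = finrank K (ker A.mulVecLin) +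
      finrank K ↥(ker C.mulVecLin ⊓ (range A.mulVecLin).comap B.mulVecLin) := by
  set N := (fromBlocks A B 0 C).mulVecLin
  have hN (v : n ⊕ n' → K) := fromBlocks_zero₂₁_mulVec_eq_zero_iff A B C v
  let q : ker N →ₗ[K] n' → K := funLeft K K Sum.inr ∘ₗ (ker N).subtype
  let j : ker q →ₗ[K] n → K := funLeft K K Sum.inl ∘ₗ (ker N).subtype ∘ₗ (ker q).subtype
  have hq : range q = ker C.mulVecLin ⊓ (range A.mulVecLin).comap B.mulVecLin := by
    ext y
    simp only [mem_inf, mem_ker, mem_comap, mem_range, mulVecLin_apply]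
    constructor
    · rintro ⟨⟨v, hv⟩, rfl⟩
      obtain ⟨h1, h2⟩ := (hN v).1 hv
      exact ⟨h2, -(v ∘ Sum.inl), by rw [mulVec_neg, neg_eq_iff_add_eq_zero]; exact h1⟩
    · rintro ⟨hy, x, hx⟩
      refine ⟨⟨Sum.elim (-x) y, (hN _).2 ⟨?_, hy⟩⟩, rfl⟩
      simp [mulVec_neg, hx]
  have hj_inj : Function.Injective j := by
    rintro ⟨⟨v, hv⟩, hv'⟩ ⟨⟨w, hw⟩, hw'⟩ h
    have hvw : v = w := by
      ext (i | i)
      · exact congrFun h i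
      · exact (congrFun (mem_ker.1 hv') i).trans (congrFun (mem_ker.1 hw') i).symm
    subst hvw
    rfl
  have hj : range j = ker A.mulVecLin := by
    ext x
    rw [mem_ker, mulVecLin_apply]
    constructor
    · rintro ⟨⟨⟨v, hv⟩, hv'⟩, rfl⟩
      obtain ⟨h1, -⟩ := (hN v).1 hv
      rwa [show v ∘ Sum.inr = 0 from mem_ker.1 hv', mulVec_zero, add_zero] at h1
    · intro hx
      refine ⟨⟨⟨Sum.elim x 0, (hN _).2 ⟨by simpa using hx, by simp⟩⟩, ?_⟩, rfl⟩
      exact mem_ker.2 (Sum.elim_comp_inr x 0)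
  rw [← finrank_range_add_finrank_ker q, hq, ← hj, finrank_range_of_inj hj_inj, add_comm]

theorem rank_fromBlocks_zero₂₁_add [Fintype n'] (A : Matrix m n K) (B : Matrix m n' K)
    (C : Matrix m' n' K) :
    (fromBlocks A B 0 C).rank + (finrank K (ker A.mulVecLin) +
      finrank K ↥(ker C.mulVecLin ⊓ (range A.mulVecLin).comap B.mulVecLin)) =
      Fintype.card n + Fintype.card n' := by
  rw [← finrank_ker_fromBlocks_zero₂₁, rank, finrank_range_add_finrank_ker,
    finrank_fintype_fun_eq_card, Fintype.card_sum]

theorem rank_add_finrank_ker (A : Matrix m n K) :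
    A.rank + finrank K (ker A.mulVecLin) = Fintype.card n := by
  rw [rank, finrank_range_add_finrank_ker, finrank_fintype_fun_eq_card]

theorem rank_fromBlocks_add_eq_rank_fromBlocks_zero₂₁ {R : Type*} [CommRing R] [CharP R 2]
    [DecidableEq n] (A D : Matrix n n R) :
    (fromBlocks (A + D) D D (A + D)).rank = (fromBlocks A D 0 A).rank := by
  set L : Matrix (n ⊕ n) (n ⊕ n) R := fromBlocks 1 0 1 1
  have hL : IsUnit L.det := by simp [L]
  have h : L * (fromBlocks (A + D) D D (A + D) * L) = fromBlocks A D 0 A := by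
    simp only [L, fromBlocks_multiply]
    congr 1 <;> ext <;> simp [add_assoc, add_left_comm, CharTwo.add_self_eq_zero]
  rw [← h, rank_mul_eq_right_of_isUnit_det _ _ hL, rank_mul_eq_left_of_isUnit_det _ _ hL]

theorem finrank_inf_comap_range_eq_zero {A D : Matrix n n K} [DecidableEq n] (hA : A.IsSymm)
    (hD : D.IsSymm) {e u : n → K} (hDe : D *ᵥ e ⬝ᵥ e = 0) (hDeu : D *ᵥ e ⬝ᵥ u ≠ 0)
    (hker : span K {e, u} = ker A.mulVecLin) :
    finrank K ↥(ker A.mulVecLin ⊓ (range A.mulVecLin).comap D.mulVecLin) = 0 := by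
  rw [Submodule.finrank_eq_zero, eq_bot_iff]
  rintro s ⟨hs, hDs⟩
  obtain ⟨a, b, rfl⟩ := mem_span_pair.1 (hker ▸ hs)
  have horth := (hA.mem_range_mulVecLin_iff _).1 hDs
  have he := horth e (hker ▸ subset_span (by simp))
  have hu := horth u (hker ▸ subset_span (by simp))
  simp [mulVec_add, mulVec_smul, add_dotProduct, hDe, hD.dotProduct_mulVec_comm u e, hDeu] at he
  simp [he, hDeu] at hu
  simp [he, hu]

theorem rank_fromBlocks_zero₂₁_eq_iff [DecidableEq n] {A D : Matrix n n K} (hA : A.IsSymm)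
    (hD : D.IsSymm) {e : n → K} (he : e ≠ 0) (hAe : A *ᵥ e = 0) (hDe : D *ᵥ e ⬝ᵥ e = 0) :
    (fromBlocks A D 0 A).rank = 2 * Fintype.card n - 2 ↔
      (fromCols A (replicateCol Unit (D *ᵥ e))).rank = Fintype.card n - 1 := by
  have hN := rank_fromBlocks_zero₂₁_add A D A
  have hA' := rank_add_finrank_ker A
  set W := ker A.mulVecLin ⊓ (range A.mulVecLin).comap D.mulVecLin
  have he_ker : e ∈ ker A.mulVecLin := hAe
  have hr : 1 ≤ finrank K (ker A.mulVecLin) :=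
    one_le_finrank_iff.2 (Submodule.ne_bot_iff _ |>.2 ⟨e, he_ker, he⟩)
  have hw : finrank K W ≤ finrank K (ker A.mulVecLin) := finrank_mono inf_le_left
  by_cases hd : D *ᵥ e ∈ range A.mulVecLin
  · rw [rank_fromCols_replicateCol_of_mem hd]
    have he_W : e ∈ W := ⟨he_ker, hd⟩
    have : 1 ≤ finrank K W := one_le_finrank_iff.2 (Submodule.ne_bot_iff _ |>.2 ⟨e, he_W, he⟩)
    omega
  · rw [rank_fromCols_replicateCol_of_notMem hd]
    obtain ⟨u, hu, hdu⟩ : ∃ u ∈ ker A.mulVecLin, D *ᵥ e ⬝ᵥ u ≠ 0 := by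
      simpa [hA.mem_range_mulVecLin_iff] using hd
    have hu_notMem : u ∉ K ∙ e := by
      rintro h
      obtain ⟨c, rfl⟩ := mem_span_singleton.1 h
      simp [dotProduct_smul, hDe] at hdu
    have hlt : K ∙ e < span K {e, u} :=
      SetLike.lt_iff_le_and_exists.2 ⟨span_mono (by simp), u, subset_span (by simp), hu_notMem⟩
    have hle : span K {e, u} ≤ ker A.mulVecLin :=
      span_le.2 (Set.insert_subset he_ker (Set.singleton_subset_iff.2 hu))
    have h1 := finrank_lt_finrank_of_lt hlt
    rw [finrank_span_singleton he] at h1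
    have h2 := finrank_mono hle
    have hW : finrank K (ker A.mulVecLin) = 2 → finrank K W = 0 := fun h =>
      finrank_inf_comap_range_eq_zero hA hD hDe hdu (eq_of_le_of_finrank_eq hle (by omega))
    omega

end Matrix

section Monsky

variable {k : ℕ} {p : Fin k → ℕ}

lemma monskyA_isSymm (hp : ∀ i, (p i).Prime) (hp4 : ∀ i, p i % 4 = 1) :
    (monskyA k p).IsSymm := by
  ext i j
  by_cases hij : i = j
  · subst hij
    rfl
  · simp [monskyA, hij, Ne.symm hij, aLeg_comm (hp i) (hp j) (hp4 i) (hp4 j)]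

/-- Row `i` of `A` holds each `[p_l/p_i]`, `l ≠ i`, twice: once off the diagonal, once in `a_ii`. -/
lemma monskyA_mulVec_one : monskyA k p *ᵥ 1 = 0 := by
  ext i
  have hoff : ∀ j ∈ Finset.univ.erase i, monskyA k p i j = aLeg (p j) (p i) := fun j hj => by
    simp [monskyA, Ne.symm (Finset.ne_of_mem_erase hj)]
  simp only [mulVec, dotProduct, Pi.one_apply, mul_one, Pi.zero_apply]
  rw [← Finset.add_sum_erase _ _ (Finset.mem_univ i), Finset.sum_congr rfl hoff]
  simp [monskyA, Finset.filter_ne', CharTwo.add_self_eq_zero]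

lemma monskyD_isSymm (u : ℤ) : (monskyD k p u).IsSymm :=
  isSymm_diagonal _

lemma monskyD_mulVec_one (u : ℤ) : monskyD k p u *ᵥ 1 = fun i => aLeg u (p i) := by
  ext i
  simp [monskyD, mulVec_diagonal]

lemma monskyD_neg_two (hp : ∀ i, (p i).Prime) (hp4 : ∀ i, p i % 4 = 1) :
    monskyD k p (-2) = monskyD k p 2 := by
  simp only [monskyD, aLeg_neg_two (hp _) (hp4 _)]

end Monsky

theorem stmt_3_general (k : ℕ) (p : Fin k → ℕ) (hp : ∀ i, (p i).Prime)
    (n : ℕ) (hn : n = ∏ i, p i) (hn8 : n % 8 = 1) (hp4 : ∀ i, p i % 4 = 1) :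
    (monskyM k p).rank = 2 * k - 2 ↔
    (Matrix.fromCols (monskyA k p)
      (Matrix.of fun i (_ : Unit) => aLeg 2 (p i))).rank = k - 1 := by
  rcases k.eq_zero_or_pos with rfl | hk
  · simp [Subsingleton.elim (monskyM 0 p) 0, Subsingleton.elim (Matrix.fromCols _ _) 0]
  have : Nonempty (Fin k) := ⟨⟨0, hk⟩⟩
  have hd : monskyD k p 2 *ᵥ 1 ⬝ᵥ 1 = 0 := by
    rw [monskyD_mulVec_one, dotProduct_one, sum_aLeg_two _ (fun i _ => hp i) (fun i _ => hp4 i),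
      ← hn, hn8, if_neg (by decide)]
  have key := rank_fromBlocks_zero₂₁_eq_iff (monskyA_isSymm hp hp4) (monskyD_isSymm 2)
    one_ne_zero monskyA_mulVec_one hd
  rw [monskyD_mulVec_one, Fintype.card_fin] at key
  rw [monskyM, monskyD_neg_two hp hp4, rank_fromBlocks_add_eq_rank_fromBlocks_zero₂₁, key]
  rfl

/-- for squarefree `n = p₁⋯p_k ≡ 1 (mod 8)` with all `p_i ≡ 1 (mod 4)`, the Monsky
matrix `M_n` has rank `2k − 2` over `F₂` iff the Rédei matrix `R = (A | B)` has rank `k − 1`,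
where `B = ([2/p₁], …, [2/p_k])ᵀ`. -/
theorem stmt_3 (k : ℕ) (p : Fin k → ℕ) (hp : ∀ i, (p i).Prime)
    (hinj : Function.Injective p)
    (n : ℕ) (hn : n = ∏ i, p i) (hn8 : n % 8 = 1) (hp4 : ∀ i, p i % 4 = 1) :
    (monskyM k p).rank = 2 * k - 2 ↔
    (Matrix.fromCols (monskyA k p)
      (Matrix.of fun i (_ : Unit) => aLeg 2 (p i))).rank = k - 1 :=
  stmt_3_general k p hp n hn hn8 hp4
end

section
/- Let K be an imaginary quadratic field with fundamental discriminant D, let c be a positive odd integer coprime to D such that (D/p) = 1 for every prime p dividing c, and let d be a positive squarefree divisor of |D|. Suppose that (−cD/d is a quadratic residue mod p) for every odd prime p dividing d, and that (cd is a quadratic residue mod p) for every odd prime p dividing (−D)/d. Then the Diophantine equation d·c·z² = x² − D·y² has a solution in integers x, y, z with z ≠ 0. -/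
/-!
Write `D = -d e`. Then `d c z² = x² + d e y²` follows from `d X² + e Y² = c Z²` (take `x = d X`),
and after removing the square parts of `e` and `c` and the common factor `gcd(d, e)` (a power
of `2`, since an odd prime dividing it would divide `D` twice) this is an instance of Legendre's
theorem: for positive `a, b, c` with `abc` squarefree, `a x² + b y² = c z²` has a solution with
`z ≠ 0` as soon as `bc`, `ac`, `-ab` are squares modulo the odd primes dividing `a`, `b`, `c`
respectively, and the hypotheses of the theorem are exactly these conditions.

Legendre's theorem is proved in the classical way. The conditions make
`Q = a x² + b y² - c z²` a product of two linear forms modulo each prime dividing `abc`, hence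
modulo `abc`. By pigeonhole, one of the forms vanishes modulo `abc` at some nonzero `(x, y, z)`
with `x² ≤ bc`, `y² ≤ ac`, `z² ≤ ab`; then `abc ∣ Q` and, by squarefreeness, `-abc < Q < 2abc`,
so `Q = 0`, or `Q = abc`, which an explicit identity turns into a solution.
-/

/-- `D` is a fundamental discriminant: either `D ≡ 1 (mod 4)` and `D` is squarefree, or
`D = 4m` with `m` squarefree and `m ≡ 2` or `3 (mod 4)`. -/
def IsFundamentalDiscriminant (D : ℤ) : Prop :=
  (D % 4 = 1 ∧ Squarefree D) ∨
  (∃ m : ℤ, D = 4 * m ∧ Squarefree m ∧ (m % 4 = 2 ∨ m % 4 = 3))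

open Finset

theorem mul_sq_sub_mul_sq_eq_mul {F : Type*} [Field F] {u v s : F} (hu : u ≠ 0)
    (hs : s * s = u * v) (Y Z : F) :
    u * Y ^ 2 - v * Z ^ 2 = (u * Y - s * Z) * (Y + u⁻¹ * s * Z) := by
  field_simp
  linear_combination Z ^ 2 * hs

def TernaryFormSplitsMod (a b c n : ℕ) : Prop :=
  ∃ A B C A' B' C' : ZMod n, ∀ X Y Z : ZMod n,
    (a : ZMod n) * X ^ 2 + b * Y ^ 2 - c * Z ^ 2 =
      (A * X + B * Y + C * Z) * (A' * X + B' * Y + C' * Z)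

namespace TernaryFormSplitsMod

variable {a b c : ℕ}

theorem of_prime {p : ℕ} [hp : Fact p.Prime] (hsf : Squarefree (a * b * c))
    (hpabc : p ∣ a * b * c) (hA : p ∣ a → IsSquare ((b : ZMod p) * c))
    (hB : p ∣ b → IsSquare ((a : ZMod p) * c)) (hC : p ∣ c → IsSquare (-((a : ZMod p) * b))) :
    TernaryFormSplitsMod a b c p := by
  have hne : ∀ {m n : ℕ}, m * n ∣ a * b * c → p ∣ m → (n : ZMod p) ≠ 0 := fun hmn hm hn =>
    Nat.squarefree_iff_prime_squarefree.mp hsf p hp.out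
      ((mul_dvd_mul hm ((ZMod.natCast_eq_zero_iff _ _).mp hn)).trans hmn)
  have hzero : ∀ {m : ℕ}, p ∣ m → (m : ZMod p) = 0 := (ZMod.natCast_eq_zero_iff _ _).mpr
  rcases hp.out.dvd_mul.mp hpabc with hpab | hpc
  · rcases hp.out.dvd_mul.mp hpab with hpa | hpb
    · obtain ⟨s, hs⟩ := hA hpa
      refine ⟨0, b, -s, 0, 1, (b : ZMod p)⁻¹ * s, fun X Y Z => ?_⟩
      rw [hzero hpa]
      linear_combination mul_sq_sub_mul_sq_eq_mul (hne (dvd_mul_right _ c) hpa) hs.symm Y Z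
    · obtain ⟨s, hs⟩ := hB hpb
      refine ⟨a, 0, -s, 1, 0, (a : ZMod p)⁻¹ * s, fun X Y Z => ?_⟩
      rw [hzero hpb]
      linear_combination
        mul_sq_sub_mul_sq_eq_mul (hne (m := b) (Dvd.intro c (by ring)) hpb) hs.symm X Z
  · obtain ⟨s, hs⟩ := hC hpc
    refine ⟨a, -s, 0, 1, (a : ZMod p)⁻¹ * s, 0, fun X Y Z => ?_⟩
    rw [hzero hpc]
    linear_combination mul_sq_sub_mul_sq_eq_mul (u := (a : ZMod p)) (v := -(b : ZMod p))
      (hne (m := c) (Dvd.intro b (by ring)) hpc) (by rw [← hs]; ring) X Y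

theorem mul {m n : ℕ} (hmn : m.Coprime n) (hm : TernaryFormSplitsMod a b c m)
    (hn : TernaryFormSplitsMod a b c n) : TernaryFormSplitsMod a b c (m * n) := by
  obtain ⟨A₁, B₁, C₁, A₁', B₁', C₁', h₁⟩ := hm
  obtain ⟨A₂, B₂, C₂, A₂', B₂', C₂', h₂⟩ := hn
  let e := ZMod.chineseRemainder hmn
  refine ⟨e.symm (A₁, A₂), e.symm (B₁, B₂), e.symm (C₁, C₂), e.symm (A₁', A₂'), e.symm (B₁', B₂'),
    e.symm (C₁', C₂'), fun X Y Z => e.injective ?_⟩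
  simp only [map_add, map_sub, map_mul, map_pow, map_natCast, RingEquiv.apply_symm_apply]
  exact Prod.ext (h₁ (e X).1 (e Y).1 (e Z).1) (h₂ (e X).2 (e Y).2 (e Z).2)

theorem prod_primes {s : Finset ℕ} (h : ∀ p ∈ s, p.Prime ∧ TernaryFormSplitsMod a b c p) :
    TernaryFormSplitsMod a b c (∏ p ∈ s, p) := by
  induction s using Finset.induction_on with
  | empty => exact ⟨0, 0, 0, 0, 0, 0, fun _ _ _ => Subsingleton.elim (α := ZMod 1) _ _⟩
  | insert p s hps ih =>
    rw [prod_insert hps]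
    obtain ⟨hp, hsplit⟩ := h p (mem_insert_self p s)
    refine mul (Nat.Coprime.prod_right fun q hq => ?_) hsplit
      (ih fun q hq => h q (mem_insert_of_mem hq))
    exact (Nat.coprime_primes hp (h q (mem_insert_of_mem hq)).1).mpr
      (ne_of_mem_of_not_mem hq hps).symm

end TernaryFormSplitsMod

theorem exists_ne_zero_abs_le_linear_eq_zero {N : ℕ} [NeZero N] (A B C : ZMod N) {k l m : ℕ}
    (hN : N < (k + 1) * (l + 1) * (m + 1)) :
    ∃ x y z : ℤ, (x, y, z) ≠ 0 ∧ |x| ≤ k ∧ |y| ≤ l ∧ |z| ≤ m ∧ A * x + B * y + C * z = 0 := by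
  let S := range (k + 1) ×ˢ range (l + 1) ×ˢ range (m + 1)
  have hcard : #(univ : Finset (ZMod N)) < #S := by
    simpa [S, ZMod.card, mul_assoc] using hN
  obtain ⟨u, hu, v, hv, huv, hAuv⟩ := exists_ne_map_eq_of_card_lt_of_maps_to hcard
    (f := fun u : ℕ × ℕ × ℕ => A * u.1 + B * u.2.1 + C * u.2.2) fun _ _ => mem_coe.2 (mem_univ _)
  simp only [S, mem_product, mem_range] at hu hv
  refine ⟨u.1 - v.1, u.2.1 - v.2.1, u.2.2 - v.2.2, ?_, ?_, ?_, ?_, ?_⟩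
  · contrapose! huv
    simp only [Prod.mk_eq_zero, sub_eq_zero, Nat.cast_inj] at huv
    exact Prod.ext huv.1 (Prod.ext huv.2.1 huv.2.2)
  all_goals try (rw [abs_le]; omega)
  push_cast
  linear_combination hAuv

theorem lt_succ_sqrt_mul_succ_sqrt_mul_succ_sqrt (a b c : ℕ) :
    a * b * c < ((b * c).sqrt + 1) * ((a * c).sqrt + 1) * ((a * b).sqrt + 1) := by
  refine lt_of_pow_lt_pow_left₀ 2 (Nat.zero_le _) ?_
  calc (a * b * c) ^ 2 = b * c * (a * c) * (a * b) := by ring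
    _ < ((b * c).sqrt + 1) ^ 2 * ((a * c).sqrt + 1) ^ 2 * ((a * b).sqrt + 1) ^ 2 := by
      gcongr ?_ * ?_ * ?_ <;> exact Nat.lt_succ_sqrt' _
    _ = _ := by ring

theorem sq_le_of_abs_le_sqrt {x : ℤ} {n : ℕ} (h : |x| ≤ n.sqrt) : x ^ 2 ≤ n := by
  calc x ^ 2 = |x| ^ 2 := (sq_abs x).symm
    _ ≤ (n.sqrt : ℤ) ^ 2 := pow_le_pow_left₀ (abs_nonneg x) h 2
    _ ≤ n := by exact_mod_cast Nat.sqrt_le' n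

theorem sq_lt_of_abs_le_sqrt {x : ℤ} {n : ℕ} (hn : Squarefree n) (hn1 : n ≠ 1)
    (h : |x| ≤ n.sqrt) : x ^ 2 < n := by
  refine (sq_le_of_abs_le_sqrt h).lt_of_ne fun hx => hn1 ?_
  have hx' : x.natAbs * x.natAbs = n := by
    rw [← sq]; exact_mod_cast (Int.natAbs_sq x).trans hx
  rw [← hx', Nat.isUnit_iff.mp (hn _ hx'.dvd), one_mul]

theorem exists_eq_of_dvd_of_lt {a b c x y z : ℤ} (ha : 0 < a) (hb : 0 < b) (hc : 0 < c)
    (hxyz : (x, y, z) ≠ 0) (hxy : a * x ^ 2 + b * y ^ 2 < 2 * (a * b * c))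
    (hz : c * z ^ 2 < a * b * c) (hdvd : a * b * c ∣ a * x ^ 2 + b * y ^ 2 - c * z ^ 2) :
    ∃ x y z : ℤ, z ≠ 0 ∧ a * x ^ 2 + b * y ^ 2 = c * z ^ 2 := by
  obtain ⟨k, hk⟩ := hdvd
  have hN : 0 < a * b * c := by positivity
  have hax : 0 ≤ a * x ^ 2 := by positivity
  have hby : 0 ≤ b * y ^ 2 := by positivity
  have hcz : 0 ≤ c * z ^ 2 := by positivity
  have hk0 : -1 < k := lt_of_mul_lt_mul_left (a := a * b * c) (by linarith) hN.le
  have hk2 : k < 2 := lt_of_mul_lt_mul_left (a := a * b * c) (by linarith) hN.le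
  interval_cases k
  · refine ⟨x, y, z, ?_, by linarith⟩
    rintro rfl
    have hx : a * x ^ 2 = 0 := by linarith
    have hy : b * y ^ 2 = 0 := by linarith
    simp only [mul_eq_zero, ha.ne', hb.ne', false_or, pow_eq_zero_iff two_ne_zero] at hx hy
    simp [hx, hy] at hxyz
  · -- `a (xz + by)² + b (yz - ax)² = (a x² + b y²)(z² + ab)`, which is `c (z² + ab)²` here.
    exact ⟨x * z + b * y, y * z - a * x, z ^ 2 + a * b, by positivity,
      by linear_combination (z ^ 2 + a * b) * hk⟩

-- The prime `2` imposes nothing: every residue modulo `2` is a square.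
structure LegendreCondition (a b c : ℕ) : Prop where
  dvd_a : ∀ p : ℕ, p.Prime → p ≠ 2 → p ∣ a → IsSquare ((b : ZMod p) * c)
  dvd_b : ∀ p : ℕ, p.Prime → p ≠ 2 → p ∣ b → IsSquare ((a : ZMod p) * c)
  dvd_c : ∀ p : ℕ, p.Prime → p ≠ 2 → p ∣ c → IsSquare (-((a : ZMod p) * b))

theorem ZMod.isSquare_of_isSquare_mul_sq {p : ℕ} [Fact p.Prime] {w : ZMod p} {u : ℕ}
    (hu : ¬p ∣ u) (h : IsSquare (w * u ^ 2)) : IsSquare w := by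
  have hu' : (u : ZMod p) ≠ 0 := by rwa [Ne, ZMod.natCast_eq_zero_iff]
  simpa [hu'] using h.div (IsSquare.sq (u : ZMod p))

theorem exists_common_factor_squarefree_mul {d e : ℕ} (hd : Squarefree d) (he : Squarefree e) :
    ∃ g d₁ e₁ : ℕ, d = g * d₁ ∧ e = g * e₁ ∧ Squarefree (d₁ * e) :=
  ⟨d.gcd e, d / d.gcd e, e / d.gcd e, (Nat.mul_div_cancel' (Nat.gcd_dvd_left d e)).symm,
    (Nat.mul_div_cancel' (Nat.gcd_dvd_right d e)).symm,
    Nat.squarefree_mul_iff.mpr ⟨Nat.coprime_div_gcd_of_squarefree hd he.ne_zero,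
      hd.squarefree_of_dvd (Nat.div_dvd_of_dvd (Nat.gcd_dvd_left d e)), he⟩⟩

namespace LegendreCondition

variable {a b c : ℕ}

theorem ternaryFormSplitsMod (h : LegendreCondition a b c) (hsf : Squarefree (a * b * c)) :
    TernaryFormSplitsMod a b c (a * b * c) := by
  rw [← Nat.prod_primeFactors_of_squarefree hsf]
  refine TernaryFormSplitsMod.prod_primes fun p hp => ⟨Nat.prime_of_mem_primeFactors hp, ?_⟩
  have hp' := Nat.prime_of_mem_primeFactors hp
  have : Fact p.Prime := ⟨hp'⟩
  obtain rfl | hp2 := eq_or_ne p 2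
  · exact .of_prime hsf (Nat.dvd_of_mem_primeFactors hp) (fun _ => isSquare_of_charTwo' _)
      (fun _ => isSquare_of_charTwo' _) (fun _ => isSquare_of_charTwo' _)
  · exact .of_prime hsf (Nat.dvd_of_mem_primeFactors hp) (h.dvd_a p hp' hp2) (h.dvd_b p hp' hp2)
      (h.dvd_c p hp' hp2)

theorem exists_eq_of_one_one (h : LegendreCondition 1 1 c) (hc : Squarefree c) :
    ∃ x y z : ℤ, z ≠ 0 ∧ 1 * x ^ 2 + 1 * y ^ 2 = c * z ^ 2 := by
  have hneg : IsSquare (-1 : ZMod c) := by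
    rw [ZMod.isSquare_neg_one_iff_forall_mem_primeFactors_mod_four_ne_three hc]
    intro q hq
    have hq' := Nat.prime_of_mem_primeFactors hq
    have : Fact q.Prime := ⟨hq'⟩
    obtain rfl | hq2 := eq_or_ne q 2
    · decide
    · rw [← ZMod.exists_sq_eq_neg_one_iff]
      simpa using h.dvd_c q hq' hq2 (Nat.dvd_of_mem_primeFactors hq)
  obtain ⟨u, v, huv⟩ := Nat.eq_sq_add_sq_of_isSquare_mod_neg_one hneg
  exact ⟨u, v, 1, one_ne_zero, by rw [huv]; push_cast; ring⟩

theorem exists_eq (h : LegendreCondition a b c) (hsf : Squarefree (a * b * c)) :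
    ∃ x y z : ℤ, z ≠ 0 ∧ a * x ^ 2 + b * y ^ 2 = c * z ^ 2 := by
  -- For `a = b = 1` the bound `c z² < abc` below fails; this case is the two-squares theorem.
  by_cases hab : a = 1 ∧ b = 1
  · obtain ⟨rfl, rfl⟩ := hab
    exact h.exists_eq_of_one_one (by simpa using hsf)
  obtain ⟨A, B, C, A', B', C', hQ⟩ := h.ternaryFormSplitsMod hsf
  have : NeZero (a * b * c) := ⟨hsf.ne_zero⟩
  obtain ⟨x, y, z, hne, hx, hy, hz, hL⟩ :=
    exists_ne_zero_abs_le_linear_eq_zero A B C (lt_succ_sqrt_mul_succ_sqrt_mul_succ_sqrt a b c)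
  have hpos : 0 < a ∧ 0 < b ∧ 0 < c := by
    simpa [Nat.pos_iff_ne_zero, and_assoc] using hsf.ne_zero
  have hsf_bc : Squarefree (b * c) := hsf.squarefree_of_dvd (Dvd.intro_left a (by ring))
  have hsf_ac : Squarefree (a * c) := hsf.squarefree_of_dvd (Dvd.intro_left b (by ring))
  have hsf_ab : Squarefree (a * b) := hsf.squarefree_of_dvd (Dvd.intro c rfl)
  have hx2 : x ^ 2 ≤ b * c := by exact_mod_cast sq_le_of_abs_le_sqrt hx
  have hy2 : y ^ 2 ≤ a * c := by exact_mod_cast sq_le_of_abs_le_sqrt hy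
  have hz2 : z ^ 2 < a * b := by
    exact_mod_cast sq_lt_of_abs_le_sqrt hsf_ab (fun h1 => hab (mul_eq_one.mp h1)) hz
  have hxy2 : x ^ 2 < b * c ∨ y ^ 2 < a * c := by
    obtain hbc | hbc := eq_or_ne (b * c) 1
    · have hac : a * c ≠ 1 := fun hac => hab ⟨(mul_eq_one.mp hac).1, (mul_eq_one.mp hbc).1⟩
      exact .inr (by exact_mod_cast sq_lt_of_abs_le_sqrt hsf_ac hac hy)
    · exact .inl (by exact_mod_cast sq_lt_of_abs_le_sqrt hsf_bc hbc hx)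
  have ha : (0 : ℤ) < a := by exact_mod_cast hpos.1
  have hb : (0 : ℤ) < b := by exact_mod_cast hpos.2.1
  have hc : (0 : ℤ) < c := by exact_mod_cast hpos.2.2
  refine exists_eq_of_dvd_of_lt ha hb hc hne ?_ ?_ ?_
  · rcases hxy2 with h | h <;> nlinarith
  · nlinarith
  · have hQ0 : (((a * x ^ 2 + b * y ^ 2 - c * z ^ 2 : ℤ)) : ZMod (a * b * c)) = 0 := by
      push_cast
      rw [hQ, hL, zero_mul]
    exact_mod_cast (ZMod.intCast_zmod_eq_zero_iff_dvd _ _).mp hQ0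

theorem of_common_factor {g : ℕ} (h : LegendreCondition (g * a) (g * b) c)
    (hg : ∀ p, p.Prime → p ≠ 2 → ¬p ∣ g) : LegendreCondition a b (c * g) where
  dvd_a p hp hp2 hpa := by
    simpa [mul_comm, mul_left_comm] using h.dvd_a p hp hp2 (dvd_mul_of_dvd_right hpa g)
  dvd_b p hp hp2 hpb := by
    simpa [mul_comm, mul_left_comm] using h.dvd_b p hp hp2 (dvd_mul_of_dvd_right hpb g)
  dvd_c p hp hp2 hpcg := by
    have : Fact p.Prime := ⟨hp⟩
    have hpc : p ∣ c := (hp.dvd_mul.mp hpcg).resolve_right (hg p hp hp2)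
    refine ZMod.isSquare_of_isSquare_mul_sq (hg p hp hp2) ?_
    convert h.dvd_c p hp hp2 hpc using 1
    push_cast
    ring

theorem of_sq_mul {s t : ℕ} (h : LegendreCondition a (s ^ 2 * b) (t ^ 2 * c))
    (hs : ∀ p, p.Prime → p ≠ 2 → p ∣ a * c → ¬p ∣ s) (ht : t.Coprime (a * b)) :
    LegendreCondition a b c where
  dvd_a p hp hp2 hpa := by
    have : Fact p.Prime := ⟨hp⟩
    have hpt : ¬p ∣ t := fun hpt =>
      Nat.not_coprime_of_dvd_of_dvd hp.one_lt hpt (dvd_mul_of_dvd_left hpa b) ht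
    have hps : ¬p ∣ s := hs p hp hp2 (dvd_mul_of_dvd_left hpa c)
    refine ZMod.isSquare_of_isSquare_mul_sq (u := s * t)
      (fun hpst => (hp.dvd_mul.mp hpst).elim hps hpt) ?_
    convert h.dvd_a p hp hp2 hpa using 1
    push_cast
    ring
  dvd_b p hp hp2 hpb := by
    have : Fact p.Prime := ⟨hp⟩
    refine ZMod.isSquare_of_isSquare_mul_sq (u := t)
      (fun hpt => Nat.not_coprime_of_dvd_of_dvd hp.one_lt hpt (dvd_mul_of_dvd_right hpb a) ht) ?_
    convert h.dvd_b p hp hp2 (dvd_mul_of_dvd_right hpb _) using 1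
    push_cast
    ring
  dvd_c p hp hp2 hpc := by
    have : Fact p.Prime := ⟨hp⟩
    refine ZMod.isSquare_of_isSquare_mul_sq (hs p hp hp2 (dvd_mul_of_dvd_right hpc a)) ?_
    convert h.dvd_c p hp hp2 (dvd_mul_of_dvd_right hpc _) using 1
    push_cast
    ring

theorem exists_eq_of_squarefree {d e : ℕ} (h : LegendreCondition d e c) (hd : Squarefree d)
    (he : Squarefree e) (hc : Squarefree c) (hcop : c.Coprime (d * e))
    (hde : ∀ p, p.Prime → p ∣ d → p ∣ e → p = 2) :
    ∃ x y z : ℤ, z ≠ 0 ∧ d * x ^ 2 + e * y ^ 2 = c * z ^ 2 := by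
  obtain ⟨g, d₁, e₁, rfl, rfl, hsf⟩ := exists_common_factor_squarefree_mul hd he
  have hg : ∀ p, p.Prime → p ≠ 2 → ¬p ∣ g := fun p hp hp2 hpg =>
    hp2 (hde p hp (dvd_mul_of_dvd_left hpg d₁) (dvd_mul_of_dvd_left hpg e₁))
  have hsf' : Squarefree (d₁ * e₁ * (c * g)) := by
    have : Squarefree (c * (d₁ * (g * e₁))) := Nat.squarefree_mul_iff.mpr
      ⟨hcop.coprime_dvd_right (mul_dvd_mul_right (Dvd.intro_left g rfl) _), hc, hsf⟩
    convert this using 1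
    ring
  obtain ⟨x, y, z, hz, hxyz⟩ := (h.of_common_factor hg).exists_eq hsf'
  have hg0 : (g : ℤ) ≠ 0 := by exact_mod_cast left_ne_zero_of_mul hd.ne_zero
  refine ⟨x, y, g * z, mul_ne_zero hg0 hz, ?_⟩
  push_cast at hxyz ⊢
  linear_combination (g : ℤ) * hxyz

theorem exists_mul_mul_sq_eq_sq_add {d e : ℕ} (h : LegendreCondition d e c) (hd : Squarefree d)
    (he : 0 < e) (hc : 0 < c) (hcop : c.Coprime (d * e))
    (hde : ∀ p, p.Prime → p ∣ d → p ∣ e → p = 2) :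
    ∃ x y z : ℤ, z ≠ 0 ∧ d * c * z ^ 2 = x ^ 2 + d * e * y ^ 2 := by
  obtain ⟨e₀, s, -, hs, rfl, he₀⟩ := Nat.sq_mul_squarefree_of_pos he
  obtain ⟨c₀, t, -, -, rfl, hc₀⟩ := Nat.sq_mul_squarefree_of_pos hc
  have hcop₀ : c₀.Coprime (d * e₀) :=
    (hcop.coprime_dvd_left (Dvd.intro_left _ rfl)).coprime_dvd_right
      (mul_dvd_mul_left d (Dvd.intro_left _ rfl))
  have hs' : ∀ p, p.Prime → p ≠ 2 → p ∣ d * c₀ → ¬p ∣ s := by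
    intro p hp hp2 hpdc hps
    have hpe : p ∣ s ^ 2 * e₀ := dvd_mul_of_dvd_left (dvd_pow hps two_ne_zero) _
    rcases hp.dvd_mul.mp hpdc with hpd | hpc
    · exact hp2 (hde p hp hpd hpe)
    · exact Nat.not_coprime_of_dvd_of_dvd hp.one_lt (dvd_mul_of_dvd_right hpc _)
        (dvd_mul_of_dvd_right hpe d) hcop
  have ht : t.Coprime (d * e₀) :=
    (hcop.coprime_dvd_left (dvd_mul_of_dvd_left (dvd_pow_self t two_ne_zero) _)).coprime_dvd_right
      (mul_dvd_mul_left d (Dvd.intro_left _ rfl))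
  obtain ⟨x, y, z, hz, hxyz⟩ := (h.of_sq_mul hs' ht).exists_eq_of_squarefree hd he₀ hc₀ hcop₀
    fun p hp hpd hpe => hde p hp hpd (dvd_mul_of_dvd_right hpe _)
  refine ⟨d * s * t * x, t * y, s * z, mul_ne_zero (by exact_mod_cast hs.ne') hz, ?_⟩
  push_cast
  linear_combination (-(d * s ^ 2 * t ^ 2 : ℤ)) * hxyz

end LegendreCondition

theorem IsFundamentalDiscriminant.eq_two_of_mul_self_dvd {D : ℤ}
    (hD : IsFundamentalDiscriminant D) {p : ℕ} (hp : p.Prime) (h : (p * p : ℤ) ∣ D) : p = 2 := by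
  by_contra hp2
  have hunit : ¬IsUnit (p : ℤ) := (Nat.prime_iff_prime_int.mp hp).not_isUnit
  rcases hD with ⟨-, hsf⟩ | ⟨m, rfl, hsf, -⟩
  · exact hunit (hsf _ h)
  · have hcop : IsCoprime ((p : ℤ) * p) 4 := by
      have : (p * p).Coprime (2 ^ 2) := by
        have := ((Nat.coprime_primes hp Nat.prime_two).mpr hp2).pow_right 2
        exact this.mul_left this
      exact_mod_cast Nat.isCoprime_iff_coprime.mpr this
    exact hunit (hsf _ (hcop.dvd_of_dvd_mul_left h))

theorem stmt_7_general (D : ℤ) (hDneg : D < 0) (hDfund : IsFundamentalDiscriminant D)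
    (c : ℕ) (hcpos : 0 < c) (hccop : IsCoprime (c : ℤ) D)
    (hcsq : ∀ q : ℕ, q.Prime → q ∣ c → IsSquare ((D : ZMod q)))
    (d : ℕ) (hdsf : Squarefree d) (hdvd : (d : ℤ) ∣ D)
    (h1 : ∀ p : ℕ, p.Prime → p ≠ 2 → (p : ℤ) ∣ (d : ℤ) →
      IsSquare (((-(c : ℤ) * D / (d : ℤ)) : ℤ) : ZMod p))
    (h2 : ∀ p : ℕ, p.Prime → p ≠ 2 → (p : ℤ) ∣ (-D / (d : ℤ)) →
      IsSquare ((((c : ℤ) * (d : ℤ)) : ℤ) : ZMod p)) :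
    ∃ x y z : ℤ, z ≠ 0 ∧ (d : ℤ) * (c : ℤ) * z ^ 2 = x ^ 2 - D * y ^ 2 := by
  obtain ⟨k, rfl⟩ := hdvd
  have hd0 : (d : ℤ) ≠ 0 := by exact_mod_cast hdsf.ne_zero
  obtain ⟨e, rfl⟩ : ∃ e : ℕ, k = -e :=
    ⟨k.natAbs, by have := neg_of_mul_neg_right hDneg (Nat.cast_nonneg d); omega⟩
  have he : 0 < e := Nat.pos_of_ne_zero (by rintro rfl; simp at hDneg)
  have hcop : c.Coprime (d * e) := by
    rw [← Nat.isCoprime_iff_coprime]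
    push_cast
    rwa [mul_neg, IsCoprime.neg_right_iff] at hccop
  have hde : ∀ p, p.Prime → p ∣ d → p ∣ e → p = 2 := fun p hp hpd hpe =>
    hDfund.eq_two_of_mul_self_dvd hp (by rw [mul_neg, dvd_neg]; exact_mod_cast mul_dvd_mul hpd hpe)
  have hcond : LegendreCondition d e c := by
    refine ⟨fun p hp hp2 hpd => ?_, fun p hp hp2 hpe => ?_, fun p hp hp2 hpc => ?_⟩
    · have := h1 p hp hp2 (by exact_mod_cast hpd)
      rw [show -(c : ℤ) * (d * -e) = d * (e * c) by ring, Int.mul_ediv_cancel_left _ hd0] at this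
      exact_mod_cast this
    · have := h2 p hp hp2 (by
        rw [show -((d : ℤ) * -e) = d * e by ring, Int.mul_ediv_cancel_left _ hd0]
        exact_mod_cast hpe)
      simpa [mul_comm] using this
    · simpa using hcsq p hp hpc
  obtain ⟨x, y, z, hz, h⟩ := hcond.exists_mul_mul_sq_eq_sq_add hdsf he hcpos hcop hde
  exact ⟨x, y, z, hz, by linear_combination h⟩

/-- under the local conditions (1) and (2), the Diophantine equation
`d·c·z² = x² − D·y²` has an integer solution with `z ≠ 0`. -/
theorem stmt_7 (D : ℤ) (hDneg : D < 0) (hDfund : IsFundamentalDiscriminant D)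
    (c : ℕ) (hcpos : 0 < c) (hcodd : Odd c) (hccop : IsCoprime (c : ℤ) D)
    (hcsq : ∀ q : ℕ, q.Prime → q ∣ c → IsSquare ((D : ZMod q)))
    (d : ℕ) (hdpos : 0 < d) (hdsf : Squarefree d) (hdvd : (d : ℤ) ∣ D)
    (h1 : ∀ p : ℕ, p.Prime → p ≠ 2 → (p : ℤ) ∣ (d : ℤ) →
      IsSquare (((-(c : ℤ) * D / (d : ℤ)) : ℤ) : ZMod p))
    (h2 : ∀ p : ℕ, p.Prime → p ≠ 2 → (p : ℤ) ∣ (-D / (d : ℤ)) →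
      IsSquare ((((c : ℤ) * (d : ℤ)) : ℤ) : ZMod p)) :
    ∃ x y z : ℤ, z ≠ 0 ∧ (d : ℤ) * (c : ℤ) * z ^ 2 = x ^ 2 - D * y ^ 2 :=
  stmt_7_general D hDneg hDfund c hcpos hccop hcsq d hdsf hdvd h1 h2
end

section
/- Let p be a prime with p ≡ 1 (mod 8) and let x, y be positive integers with p = x² − 32·y². Then 2^{(p−1)/4} ≡ (−1)^{(p−9)/8} (mod p) if and only if x ≡ 3 (mod 4). -/
/-!
Reducing `p = x² - 32y²` modulo `p` gives `2·(4y)² ≡ x²`, so Euler's criterion yields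
`2^((p-1)/4) ≡ (4y/p)·(x/p)`. By reciprocity `(4y/p)` reduces to `(2/p) = 1` and to symbols
`(p/m) = (x²/m) = 1` for odd `m ∣ y`, while `(x/p) = (p/x) = (-2·(4y)²/x) = (-2/x)`.
Finally `x² ≡ p (mod 16)` ties the parity of `(p-9)/8` to `x mod 8`, and comparing with `(-2/x)`
leaves exactly `x ≡ 3 (mod 4)`.
-/

open ZMod

theorem Nat.coprime_of_prime_eq_sq_sub_mul_sq {p x y : ℕ} {c : ℤ} (hp : p.Prime)
    (h : (p : ℤ) = x ^ 2 - c * y ^ 2) : x.Coprime y := by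
  have hx : ((x.gcd y : ℕ) : ℤ) ∣ x := Int.natCast_dvd_natCast.mpr (x.gcd_dvd_left y)
  have hy : ((x.gcd y : ℕ) : ℤ) ∣ y := Int.natCast_dvd_natCast.mpr (x.gcd_dvd_right y)
  have hdvd : ((x.gcd y : ℕ) : ℤ) ^ 2 ∣ p :=
    h ▸ (pow_dvd_pow_of_dvd hx 2).sub ((pow_dvd_pow_of_dvd hy 2).mul_left c)
  rw [sq] at hdvd
  exact Nat.isUnit_iff.mp (hp.prime.squarefree _ (mod_cast hdvd))

theorem jacobiSym_eq_one_of_modEq_sq {m p x : ℕ} (hp : p % 8 = 1) (hm : m ≠ 0)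
    (hxm : x.Coprime m) (hpx : (p : ℤ) ≡ x ^ 2 [ZMOD m]) : jacobiSym m p = 1 := by
  obtain ⟨k, m', hm', rfl⟩ := Nat.exists_eq_two_pow_mul_odd hm
  have h2 : jacobiSym 2 p = 1 := by
    rw [jacobiSym.at_two (Nat.odd_iff.mpr (by omega)), χ₈_nat_eq_if_mod_eight]
    simp [hp, show p % 2 = 1 by omega]
  have hm'p : jacobiSym m' p = 1 := by
    push_cast at hpx
    rw [jacobiSym.quadratic_reciprocity_one_mod_four' hm' (by omega),
      jacobiSym.mod_left' (hpx.of_mul_left _)]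
    exact jacobiSym.sq_one' (by simpa using hxm.coprime_dvd_right (dvd_mul_left m' _))
  push_cast
  rw [jacobiSym.mul_left, jacobiSym.pow_left, h2, hm'p, one_pow, one_mul]

theorem jacobiSym_eq_χ₈'_of_modEq_neg_two_mul_sq {x p : ℕ} {z : ℤ} (hx : Odd x) (hp : p % 4 = 1)
    (hz : z.gcd x = 1) (hpx : (p : ℤ) ≡ -2 * z ^ 2 [ZMOD x]) : jacobiSym x p = χ₈' x := by
  rw [jacobiSym.quadratic_reciprocity_one_mod_four' hx hp, jacobiSym.mod_left' hpx,
    jacobiSym.mul_left, jacobiSym.sq_one' hz, jacobiSym.at_neg_two hx, mul_one]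

theorem pow_sub_one_div_four_mul_legendreSym {p : ℕ} [Fact p.Prime] (hp : p % 4 = 1) {a b c : ℤ}
    (h : (a : ZMod p) * b ^ 2 = c ^ 2) :
    (a : ZMod p) ^ ((p - 1) / 4) * legendreSym p b = legendreSym p c := by
  have he : p / 2 = 2 * ((p - 1) / 4) := by omega
  rw [legendreSym.eq_pow, legendreSym.eq_pow, he, pow_mul, pow_mul, ← mul_pow, h]

theorem even_sub_nine_div_eight_iff {p x : ℕ} (hp : 9 ≤ p) (hx : Odd x)
    (hpx : p ≡ x ^ 2 [MOD 16]) : Even ((p - 9) / 8) ↔ x % 8 = 3 ∨ x % 8 = 5 := by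
  have hsq : x ^ 2 % 16 = (x % 16) ^ 2 % 16 := Nat.pow_mod x 2 16
  have hodd := Nat.odd_iff.mp hx
  unfold Nat.ModEq at hpx
  rw [Nat.even_iff]
  have : x % 16 < 16 := Nat.mod_lt x (by norm_num)
  interval_cases h : x % 16 <;> norm_num at hsq <;> omega

theorem intCast_χ₈'_eq_neg_one_pow_iff {R : Type*} [Ring R] (hR : (-1 : R) ≠ 1) {p x : ℕ}
    (hp : 9 ≤ p) (hx : Odd x) (hpx : p ≡ x ^ 2 [MOD 16]) :
    ((χ₈' x : ℤ) : R) = (-1) ^ ((p - 9) / 8) ↔ x % 4 = 3 := by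
  have hodd := Nat.odd_iff.mp hx
  rw [χ₈'_nat_eq_if_mod_eight, if_neg (by omega), neg_one_pow_eq_ite]
  simp only [even_sub_nine_div_eight_iff hp hx hpx]
  split_ifs <;> simp [hR, hR.symm] <;> omega

theorem stmt_14_general (p : ℕ) (hp : p.Prime) (h8 : p % 8 = 1)
    (x y : ℕ) (hy : 0 < y)
    (hxy : (p : ℤ) = (x : ℤ) ^ 2 - 32 * (y : ℤ) ^ 2) :
    (2 : ZMod p) ^ ((p - 1) / 4) = (-1 : ZMod p) ^ ((p - 9) / 8) ↔ x % 4 = 3 := by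
  have := Fact.mk hp
  have hp9 : 9 ≤ p := by
    have := hp.one_lt
    omega
  have hN : x ^ 2 = p + 32 * y ^ 2 := by zify; linarith
  have hx : Odd x := (Nat.odd_pow_iff two_ne_zero).mp <|
    hN ▸ (hp.odd_of_ne_two (by omega)).add_even ((by decide : Even 32).mul_right _)
  have hco : x.Coprime (4 * y) := ((Nat.coprime_two_right.mpr hx).pow_right 2).mul_right
    (Nat.coprime_of_prime_eq_sq_sub_mul_sq hp hxy)
  have h4y : jacobiSym (4 * y : ℕ) p = 1 :=
    jacobiSym_eq_one_of_modEq_sq h8 (by positivity) hco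
      (Int.modEq_iff_dvd.mpr ⟨8 * y, by rw [hxy]; push_cast; ring⟩)
  have hxχ : jacobiSym x p = χ₈' x :=
    jacobiSym_eq_χ₈'_of_modEq_neg_two_mul_sq hx (by omega)
      (by rw [Int.gcd_natCast_natCast]; exact hco.symm)
      (Int.modEq_iff_dvd.mpr ⟨-x, by rw [hxy]; push_cast; ring⟩)
  have hsq : ((2 : ℤ) : ZMod p) * ((4 * y : ℕ) : ℤ) ^ 2 = ((x : ℤ) : ZMod p) ^ 2 := by
    have := congrArg (Int.cast : ℤ → ZMod p) hxy
    push_cast [ZMod.natCast_self] at this ⊢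
    linear_combination this
  have h2 := pow_sub_one_div_four_mul_legendreSym (by omega) hsq
  rw [jacobiSym.legendreSym.to_jacobiSym, jacobiSym.legendreSym.to_jacobiSym, h4y, hxχ,
    Int.cast_one, mul_one, Int.cast_two] at h2
  have : Fact (2 < p) := ⟨by omega⟩
  rw [h2]
  exact intCast_χ₈'_eq_neg_one_pow_iff ZMod.neg_one_ne_one hp9 hx
    (by rw [hN]; unfold Nat.ModEq; omega)

/-- for a prime `p ≡ 1 (mod 8)` with `p = x² − 32y²` (`x, y > 0`), one has
`2^{(p−1)/4} ≡ (−1)^{(p−9)/8} (mod p)` iff `x ≡ 3 (mod 4)`. -/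
theorem stmt_14 (p : ℕ) (hp : p.Prime) (h8 : p % 8 = 1)
    (x y : ℕ) (hx : 0 < x) (hy : 0 < y)
    (hxy : (p : ℤ) = (x : ℤ) ^ 2 - 32 * (y : ℤ) ^ 2) :
    (2 : ZMod p) ^ ((p - 1) / 4) = (-1 : ZMod p) ^ ((p - 9) / 8) ↔ x % 4 = 3 :=
  stmt_14_general p hp h8 x y hy hxy
end

section
/- Let d1 and d2 be coprime positive squarefree integers, each greater than 1, all of whose prime factors are congruent to 1 modulo 8, and let (a, b, c) be positive integers with gcd(a, b, c) = 1 and c² = d1·a² + d2·b². Then every prime p dividing d1 satisfies (d2/p) = 1, and the Jacobi symbol (c/d1) equals the product over the primes p dividing d1 of the signs ε_p ∈ {±1} determined by d2^{(p−1)/4} ≡ ε_p (mod p); that is, (c/d1) equals the quartic residue symbol (d2/d1)_4. -/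
private lemma jacobiSym_prod_right' (x : ℤ) (s : Finset ℕ) (h : ∀ p ∈ s, p ≠ 0) :
    jacobiSym x (∏ p ∈ s, p) = ∏ p ∈ s, jacobiSym x p := by
  classical
  induction s using Finset.induction_on with
  | empty => simp
  | @insert q s hq ih =>
    rw [Finset.prod_insert hq, Finset.prod_insert hq,
      jacobiSym.mul_right' x (h q (Finset.mem_insert_self q s))
        (Finset.prod_ne_zero_iff.mpr fun p hp => h p (Finset.mem_insert_of_mem hp)),
      ih fun p hp => h p (Finset.mem_insert_of_mem hp)]

private lemma sign_cast_inj' {p : ℕ} (hp : 2 < p) {x y : ℤ}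
    (hx : x = 1 ∨ x = -1) (hy : y = 1 ∨ y = -1)
    (h : ((x : ZMod p)) = (y : ZMod p)) : x = y := by
  have h2 : ¬ ((2:ℤ) : ZMod p) = 0 := by
    rw [ZMod.intCast_zmod_eq_zero_iff_dvd]
    intro hd
    have := Int.le_of_dvd (by norm_num) hd
    omega
  rcases hx with rfl | rfl <;> rcases hy with rfl | rfl <;> first
    | rfl
    | (exfalso; apply h2; push_cast at h ⊢; linear_combination h)
    | (exfalso; apply h2; push_cast at h ⊢; linear_combination -h)

private lemma coprime_aux' {x y : ℕ} (h : ∀ q : ℕ, q.Prime → q ∣ x → q ∣ y → False) :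
    Nat.Coprime x y := by
  by_contra hg
  obtain ⟨q, hq, hd⟩ := Nat.exists_prime_and_dvd hg
  exact h q hq (hd.trans (Nat.gcd_dvd_left x y)) (hd.trans (Nat.gcd_dvd_right x y))

/-- for coprime squarefree `d₁, d₂ > 1` with all prime factors `≡ 1 (mod 8)` and
a primitive positive solution of `c² = d₁a² + d₂b²`: every prime `p ∣ d₁` satisfies
`(d₂/p) = 1`, and the Jacobi symbol `(c/d₁)` equals the quartic residue symbol `(d₂/d₁)₄`,
i.e. the product over primes `p ∣ d₁` of the signs `ε_p` with `d₂^{(p−1)/4} ≡ ε_p (mod p)`. -/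
theorem stmt_17 (d₁ d₂ : ℕ) (h1 : 1 < d₁) (h2 : 1 < d₂)
    (hsf₁ : Squarefree d₁) (hsf₂ : Squarefree d₂) (hcop : Nat.Coprime d₁ d₂)
    (hpf₁ : ∀ p : ℕ, p.Prime → p ∣ d₁ → p % 8 = 1)
    (hpf₂ : ∀ p : ℕ, p.Prime → p ∣ d₂ → p % 8 = 1)
    (a b c : ℕ) (ha : 0 < a) (hb : 0 < b) (hc : 0 < c)
    (hprim : Nat.gcd a (Nat.gcd b c) = 1)
    (heq : c ^ 2 = d₁ * a ^ 2 + d₂ * b ^ 2) :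
    (∀ p : ℕ, p.Prime → p ∣ d₁ → IsSquare ((d₂ : ZMod p))) ∧
    ∀ ε : ℕ → ℤ,
      (∀ p ∈ d₁.primeFactors,
        (ε p = 1 ∨ ε p = -1) ∧ ((d₂ : ZMod p)) ^ ((p - 1) / 4) = ((ε p : ℤ) : ZMod p)) →
      jacobiSym (c : ℤ) d₁ = ∏ p ∈ d₁.primeFactors, ε p := by
  -- key divisibility facts
  have key : ∀ p : ℕ, p.Prime → p ∣ d₁ → ¬ p ∣ b ∧ ¬ p ∣ c := by
    intro p pp pd
    have hpb : ¬ p ∣ b := by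
      intro hpb
      have hpc : p ∣ c := by
        apply pp.dvd_of_dvd_pow (n := 2)
        rw [heq]
        exact dvd_add (dvd_mul_of_dvd_left pd _)
          (dvd_mul_of_dvd_right (hpb.trans (dvd_pow_self b two_ne_zero)) _)
      have hda : d₁ * a ^ 2 = c ^ 2 - d₂ * b ^ 2 := by omega
      have hp2 : p ^ 2 ∣ d₁ * a ^ 2 := by
        rw [hda]
        exact Nat.dvd_sub (pow_dvd_pow_of_dvd hpc 2)
          (dvd_mul_of_dvd_right (pow_dvd_pow_of_dvd hpb 2) _)
      obtain ⟨m, hm⟩ := pd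
      have hpm : ¬ p ∣ m := by
        intro hpm
        exact pp.not_isUnit (hsf₁ p (by obtain ⟨t, rfl⟩ := hpm; exact ⟨t, by rw [hm]; ring⟩))
      have hpa : p ∣ a := by
        have h2' : p * p ∣ p * (m * a ^ 2) := by
          rw [← mul_assoc, ← hm, ← sq]; exact hp2
        have h' : p ∣ m * a ^ 2 := (Nat.mul_dvd_mul_iff_left pp.pos).mp h2'
        rcases (Nat.Prime.dvd_mul pp).mp h' with h | h
        · exact absurd h hpm
        · exact pp.dvd_of_dvd_pow h
      have hd1 : p ∣ 1 := hprim ▸ Nat.dvd_gcd hpa (Nat.dvd_gcd hpb hpc)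
      have := Nat.dvd_one.mp hd1
      have := pp.one_lt
      omega
    refine ⟨hpb, fun hpc => ?_⟩
    have hdb : d₂ * b ^ 2 = c ^ 2 - d₁ * a ^ 2 := by omega
    have hdvd : p ∣ d₂ * b ^ 2 := by
      rw [hdb]
      exact Nat.dvd_sub (dvd_pow hpc two_ne_zero) (dvd_mul_of_dvd_left pd _)
    rcases (Nat.Prime.dvd_mul pp).mp hdvd with h | h
    · have : p ∣ 1 := hcop ▸ Nat.dvd_gcd pd h
      have := Nat.dvd_one.mp this
      have := pp.one_lt
      omega
    · exact hpb (pp.dvd_of_dvd_pow h)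
  -- the key congruence mod p
  have hsq : ∀ p : ℕ, p.Prime → p ∣ d₁ →
      ((c : ZMod p)) ^ 2 = (d₂ : ZMod p) * ((b : ZMod p)) ^ 2 := by
    intro p pp pd
    have h0 : ((d₁ : ZMod p)) = 0 := (ZMod.natCast_eq_zero_iff d₁ p).mpr pd
    have := congrArg (Nat.cast : ℕ → ZMod p) heq
    push_cast at this
    rw [h0, zero_mul, zero_add] at this
    exact this
  have part1 : ∀ p : ℕ, p.Prime → p ∣ d₁ → IsSquare ((d₂ : ZMod p)) := by
    intro p pp pd
    haveI : Fact p.Prime := ⟨pp⟩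
    obtain ⟨hpb, hpc⟩ := key p pp pd
    have hbz : ((b : ZMod p)) ≠ 0 := by
      rw [Ne, ZMod.natCast_eq_zero_iff]; exact hpb
    refine ⟨(c : ZMod p) * ((b : ZMod p))⁻¹, ?_⟩
    field_simp
    linear_combination (-1 : ZMod p) * hsq p pp pd
  refine ⟨part1, ?_⟩
  intro ε hε
  -- d₁ ≡ 1 (mod 8)
  have hd1z : ((d₁ : ℕ) : ZMod 8) = 1 := by
    conv_lhs => rw [← Nat.prod_primeFactors_of_squarefree hsf₁]
    rw [Nat.cast_prod]
    apply Finset.prod_eq_one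
    intro p hp
    have h8 := hpf₁ p (Nat.prime_of_mem_primeFactors hp) (Nat.dvd_of_mem_primeFactors hp)
    have h1 : ((p : ℕ) : ZMod 8) = ((1 : ℕ) : ZMod 8) :=
      (ZMod.natCast_eq_natCast_iff' p 1 8).mpr (by omega)
    simpa using h1
  have hd8 : d₁ % 8 = 1 := by
    have := (ZMod.natCast_eq_natCast_iff' d₁ 1 8).mp (by simpa using hd1z)
    omega
  have hodd₁ : Odd d₁ := Nat.odd_iff.mpr (by omega)
  -- product formula
  have hprod : ∀ x : ℤ, jacobiSym x d₁ = ∏ p ∈ d₁.primeFactors, jacobiSym x p := by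
    intro x
    conv_lhs => rw [← Nat.prod_primeFactors_of_squarefree hsf₁]
    exact jacobiSym_prod_right' x _ fun p hp => (Nat.prime_of_mem_primeFactors hp).pos.ne'
  -- termwise identity
  have hterm : ∀ p ∈ d₁.primeFactors, jacobiSym (c : ℤ) p = ε p * jacobiSym (b : ℤ) p := by
    intro p hp
    have pp := Nat.prime_of_mem_primeFactors hp
    have pd := Nat.dvd_of_mem_primeFactors hp
    haveI : Fact p.Prime := ⟨pp⟩
    obtain ⟨hpb, hpc⟩ := key p pp pd
    obtain ⟨hε1, hε2⟩ := hε p hp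
    have h8 := hpf₁ p pp pd
    have hp2 : 2 < p := by have := pp.two_le; omega
    have hbz : (((b : ℕ) : ℤ) : ZMod p) ≠ 0 := by
      push_cast
      rw [Ne, ZMod.natCast_eq_zero_iff]; exact hpb
    have hcz : (((c : ℕ) : ℤ) : ZMod p) ≠ 0 := by
      push_cast
      rw [Ne, ZMod.natCast_eq_zero_iff]; exact hpc
    rw [← jacobiSym.legendreSym.to_jacobiSym, ← jacobiSym.legendreSym.to_jacobiSym]
    have hy : ε p * legendreSym p (b : ℤ) = 1 ∨ ε p * legendreSym p (b : ℤ) = -1 := by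
      rcases hε1 with h | h <;>
        rcases legendreSym.eq_one_or_neg_one p hbz with h' | h' <;> simp [h, h']
    apply sign_cast_inj' hp2 (legendreSym.eq_one_or_neg_one p hcz) hy
    have hdiv : p / 2 = 2 * ((p - 1) / 4) := by omega
    calc ((legendreSym p ((c : ℕ) : ℤ) : ℤ) : ZMod p)
        = ((c : ZMod p)) ^ (p / 2) := by rw [legendreSym.eq_pow]; push_cast; ring
      _ = ((ε p : ℤ) : ZMod p) * ((b : ZMod p)) ^ (p / 2) := by
          rw [hdiv, pow_mul, pow_mul, hsq p pp pd, mul_pow, hε2]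
      _ = (((ε p * legendreSym p ((b : ℕ) : ℤ)) : ℤ) : ZMod p) := by
          rw [Int.cast_mul, legendreSym.eq_pow]; push_cast; ring
  -- J(b | d₁) = 1
  have hjb : jacobiSym ((b : ℕ) : ℤ) d₁ = 1 := by
    obtain ⟨k, m, hm2, hbm⟩ := Nat.exists_eq_pow_mul_and_not_dvd hb.ne' 2 (by norm_num)
    have hmodd : Odd m := Nat.odd_iff.mpr (by omega)
    have hmb : m ∣ b := ⟨2 ^ k, by rw [hbm]; ring⟩
    have hcm : Nat.Coprime c m := by
      apply coprime_aux'
      intro q hq hqc hqm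
      have hqb : q ∣ b := hqm.trans hmb
      have hda : d₁ * a ^ 2 = c ^ 2 - d₂ * b ^ 2 := by omega
      have hqd : q ∣ d₁ * a ^ 2 := by
        rw [hda]
        exact Nat.dvd_sub (dvd_pow hqc two_ne_zero)
          (dvd_mul_of_dvd_right (dvd_pow hqb two_ne_zero) _)
      rcases (Nat.Prime.dvd_mul hq).mp hqd with h | h
      · exact (key q hq h).1 hqb
      · have hqa := hq.dvd_of_dvd_pow h
        have : q ∣ 1 := hprim ▸ Nat.dvd_gcd hqa (Nat.dvd_gcd hqb hqc)
        have := Nat.dvd_one.mp this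
        have := hq.one_lt
        omega
    have ham : Nat.Coprime a m := by
      apply coprime_aux'
      intro q hq hqa hqm
      have hqb : q ∣ b := hqm.trans hmb
      have hqc : q ∣ c := by
        apply hq.dvd_of_dvd_pow (n := 2)
        rw [heq]
        exact dvd_add (dvd_mul_of_dvd_right (dvd_pow hqa two_ne_zero) _)
          (dvd_mul_of_dvd_right (dvd_pow hqb two_ne_zero) _)
      have : q ∣ 1 := hprim ▸ Nat.dvd_gcd hqa (Nat.dvd_gcd hqb hqc)
      have := Nat.dvd_one.mp this
      have := hq.one_lt
      omega
    -- J(d₁ | m) = 1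
    have hmod : jacobiSym ((d₁ : ℤ) * ((a : ℕ) : ℤ) ^ 2) m = jacobiSym (((c : ℕ) : ℤ) ^ 2) m := by
      apply jacobiSym.mod_left'
      apply Int.ModEq.symm
      apply Int.modEq_iff_dvd.mpr
      have hcast : ((d₁ : ℤ) * ((a : ℕ) : ℤ) ^ 2) - ((c : ℕ) : ℤ) ^ 2 = -((d₂ : ℤ) * ((b : ℕ) : ℤ) ^ 2) := by
        have h' : ((c : ℕ) : ℤ) ^ 2 = (d₁ : ℤ) * ((a : ℕ) : ℤ) ^ 2 + (d₂ : ℤ) * ((b : ℕ) : ℤ) ^ 2 := by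
          exact_mod_cast heq
        linarith
      rw [hcast]
      apply dvd_neg.mpr
      exact Dvd.dvd.mul_left
        (by exact_mod_cast (Int.natCast_dvd_natCast.mpr (hmb.trans (dvd_pow_self b two_ne_zero)))
          : ((m : ℕ) : ℤ) ∣ ((b : ℕ) : ℤ) ^ 2) _
    rw [jacobiSym.mul_left,
      jacobiSym.sq_one' (by rw [Int.gcd_natCast_natCast]; exact ham)] at hmod
    rw [jacobiSym.sq_one' (by rw [Int.gcd_natCast_natCast]; exact hcm), mul_one] at hmod
    -- assemble
    have hbcast : ((b : ℕ) : ℤ) = (2 : ℤ) ^ k * ((m : ℕ) : ℤ) := by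
      exact_mod_cast congrArg (Nat.cast : ℕ → ℤ) hbm
    rw [hbcast, jacobiSym.mul_left, jacobiSym.pow_left, jacobiSym.at_two hodd₁]
    have hχ : ZMod.χ₈ ((d₁ : ℕ) : ZMod 8) = 1 := by rw [hd1z]; decide
    rw [hχ, one_pow, one_mul]
    rw [jacobiSym.quadratic_reciprocity_one_mod_four' hmodd (by omega : d₁ % 4 = 1)]
    exact hmod
  rw [hprod, Finset.prod_congr rfl hterm, Finset.prod_mul_distrib, ← hprod, hjb, mul_one]
end
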